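/- arXiv:1903.09449 — 2 statements merged into one kernel-verified Lean document; each statement's English description precedes it below -/
import Mathlib

section
/- Assume ε ≤ δ/(1+τ), τ > d−1 and R > [r·2^{ε(τ+1)}/(2γ)]^{1/(δ−ε(τ+1))}. Then the r-neighborhood of the resonant set Ω^{(R,c)} := B_R ∖ Ω satisfies |Ω^{(R,c)}_r| ≤ C·R^{d+δ−1}, where |·| is Lebesgue measure and the constant C is independent of R. -/
open scoped BigOperators RealInnerProductSpace
open MeasureTheory

noncomputable section

/-- Euclidean space ℝ^d. -/
abbrev Esp (d : ℕ) := EuclideanSpace ℝ (Fin d)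

/-- Japanese bracket `⟨ξ⟩ = (1+|ξ|²)^{1/2}`. -/
def jb {d : ℕ} (ξ : Esp d) : ℝ := Real.sqrt (1 + ‖ξ‖ ^ 2)

/-- Partial derivative of a symbol in the direction of the i-th x-variable. -/
def pdx {d : ℕ} (i : Fin d) (a : Esp d × Esp d → ℂ) : Esp d × Esp d → ℂ :=
  fun p => fderiv ℝ a p (EuclideanSpace.single i 1, 0)

/-- Partial derivative of a symbol in the direction of the i-th ξ-variable. -/
def pdxi {d : ℕ} (i : Fin d) (a : Esp d × Esp d → ℂ) : Esp d × Esp d → ℂ :=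
  fun p => fderiv ℝ a p (0, EuclideanSpace.single i 1)

/-- Iterated multi-index derivative built from a family of one-step derivatives. -/
def multiD {d : ℕ} (D : Fin d → (Esp d × Esp d → ℂ) → (Esp d × Esp d → ℂ))
    (α : Fin d → ℕ) (a : Esp d × Esp d → ℂ) : Esp d × Esp d → ℂ :=
  ((List.finRange d).foldr (fun i acc => (D i)^[α i] ∘ acc) id) a

/-- `∂_x^α ∂_ξ^β a`. -/
def symD {d : ℕ} (α β : Fin d → ℕ) (a : Esp d × Esp d → ℂ) : Esp d × Esp d → ℂ :=
  multiD pdx α (multiD pdxi β a)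

/-- Length |α| of a multi-index. -/
def msize {d : ℕ} (α : Fin d → ℕ) : ℕ := ∑ i, α i

/-- The lattice Γ generated by the basis e. -/
def lattice {d : ℕ} (e : Module.Basis (Fin d) ℝ (Esp d)) : Set (Esp d) :=
  {γ | ∃ k : Fin d → ℤ, γ = ∑ i, (k i : ℝ) • e i}

/-- The dual lattice Γ*. -/
def dualLattice {d : ℕ} (e : Module.Basis (Fin d) ℝ (Esp d)) : Set (Esp d) :=
  {b | ∀ γ ∈ lattice e, ∃ n : ℤ, (inner ℝ b γ : ℝ) = 2 * Real.pi * n}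

/-- Γ-periodicity of a function on ℝ^d (i.e. a function on the torus 𝕋^d_Γ). -/
def IsPeriodic {d : ℕ} (e : Module.Basis (Fin d) ℝ (Esp d)) (u : Esp d → ℂ) : Prop :=
  ∀ γ ∈ lattice e, ∀ x, u (x + γ) = u x

/-- Γ-periodicity in x of a symbol. -/
def IsPeriodicSymb {d : ℕ} (e : Module.Basis (Fin d) ℝ (Esp d)) (a : Esp d × Esp d → ℂ) : Prop :=
  ∀ γ ∈ lattice e, ∀ x ξ, a (x + γ, ξ) = a (x, ξ)

/-- The symbol class S^m_δ on 𝕋^d_Γ × ℝ^d. -/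
def IsSymbol {d : ℕ} (e : Module.Basis (Fin d) ℝ (Esp d)) (δ m : ℝ)
    (a : Esp d × Esp d → ℂ) : Prop :=
  ContDiff ℝ (⊤ : ℕ∞) a ∧ IsPeriodicSymb e a ∧
    ∀ α β : Fin d → ℕ, ∃ C : ℝ, ∀ p : Esp d × Esp d,
      ‖symD α β a p‖ ≤ C * jb p.2 ^ (m - δ * (msize β : ℝ))

/-- Smoothing symbols S^{-∞}. -/
def IsSmoothing {d : ℕ} (e : Module.Basis (Fin d) ℝ (Esp d)) (δ : ℝ)
    (a : Esp d × Esp d → ℂ) : Prop :=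
  ∀ m : ℝ, IsSymbol e δ m a

/-- A fundamental domain of the torus ℝ^d/Γ. -/
def fundDomain {d : ℕ} (e : Module.Basis (Fin d) ℝ (Esp d)) : Set (Esp d) :=
  (fun t : Fin d → ℝ => ∑ i, t i • e i) '' (Set.univ.pi fun _ => Set.Ico (0:ℝ) 1)

/-- The measure |𝕋^d_Γ| of the torus. -/
def torusVol {d : ℕ} (e : Module.Basis (Fin d) ℝ (Esp d)) : ℝ :=
  (volume (fundDomain e)).toReal

/-- Fourier coefficient û(ξ) of a (periodic) function. -/
def fourierCf {d : ℕ} (e : Module.Basis (Fin d) ℝ (Esp d)) (u : Esp d → ℂ) (ξ : Esp d) : ℂ :=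
  ((torusVol e : ℝ) : ℂ)⁻¹ *
    ∫ x in fundDomain e, u x * Complex.exp (-Complex.I * ((inner ℝ ξ x : ℝ) : ℂ))

/-- x-Fourier coefficient â(k, ξ) of a symbol. -/
def symbFourier {d : ℕ} (e : Module.Basis (Fin d) ℝ (Esp d)) (a : Esp d × Esp d → ℂ)
    (k ξ : Esp d) : ℂ :=
  ((torusVol e : ℝ) : ℂ)⁻¹ *
    ∫ x in fundDomain e, a (x, ξ) * Complex.exp (-Complex.I * ((inner ℝ k x : ℝ) : ℂ))

/-- Weyl quantization Op^w(a). -/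
def weylOp {d : ℕ} (e : Module.Basis (Fin d) ℝ (Esp d)) (a : Esp d × Esp d → ℂ)
    (u : Esp d → ℂ) : Esp d → ℂ :=
  fun x => ∑' k : dualLattice e, ∑' ξ : dualLattice e,
    symbFourier e a ((k : Esp d) - (ξ : Esp d)) ((2:ℝ)⁻¹ • ((k : Esp d) + (ξ : Esp d))) *
      fourierCf e u ξ * Complex.exp (Complex.I * ((inner ℝ (k : Esp d) x : ℝ) : ℂ))

/-- Classical quantization Op^{cl}(a). -/
def clOp {d : ℕ} (e : Module.Basis (Fin d) ℝ (Esp d)) (a : Esp d × Esp d → ℂ)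
    (u : Esp d → ℂ) : Esp d → ℂ :=
  fun x => ∑' ξ : dualLattice e,
    a (x, (ξ : Esp d)) * fourierCf e u ξ * Complex.exp (Complex.I * ((inner ℝ x (ξ : Esp d) : ℝ) : ℂ))

/-- The operator (−Δ)^{M/2}: the Fourier multiplier u ↦ Σ |ξ|^M û(ξ) e^{iξ·x}. -/
def freeOp {d : ℕ} (e : Module.Basis (Fin d) ℝ (Esp d)) (M : ℝ) (u : Esp d → ℂ) : Esp d → ℂ :=
  fun x => ∑' ξ : dualLattice e,
    ((‖(ξ : Esp d)‖ ^ M : ℝ) : ℂ) * fourierCf e u ξ *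
      Complex.exp (Complex.I * ((inner ℝ (ξ : Esp d) x : ℝ) : ℂ))

/-- The L²(𝕋^d_Γ) inner product. -/
def torusInner {d : ℕ} (e : Module.Basis (Fin d) ℝ (Esp d)) (u v : Esp d → ℂ) : ℂ :=
  ∫ x in fundDomain e, (starRingEnd ℂ) (u x) * v x

/-- Self-adjointness of an operator w.r.t. the L²(𝕋^d_Γ) inner product. -/
def IsSelfAdjointOp {d : ℕ} (e : Module.Basis (Fin d) ℝ (Esp d))
    (T : (Esp d → ℂ) → (Esp d → ℂ)) : Prop :=
  ∀ u v : Esp d → ℂ, ContDiff ℝ (⊤ : ℕ∞) u → IsPeriodic e u → ContDiff ℝ (⊤ : ℕ∞) v → IsPeriodic e v →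
    torusInner e (T u) v = torusInner e u (T v)

/-- λ is an eigenvalue of the operator T on the torus. -/
def IsEigenvalue {d : ℕ} (e : Module.Basis (Fin d) ℝ (Esp d))
    (T : (Esp d → ℂ) → (Esp d → ℂ)) (lam : ℝ) : Prop :=
  ∃ u : Esp d → ℂ, ContDiff ℝ (⊤ : ℕ∞) u ∧ IsPeriodic e u ∧ u ≠ 0 ∧
    ∀ x, T u x = (lam : ℂ) * u x


/-- The s-neighborhood `𝒜_s = ⋃_{x∈𝒜} B_s(x)` of a set. -/
def nbhdSet {d : ℕ} (A : Set (Esp d)) (s : ℝ) : Set (Esp d) :=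
  ⋃ x ∈ A, Metric.ball x s

set_option maxHeartbeats 2000000

private lemma finite_of_sep {d : ℕ} (K : Set (Esp d)) (r ρ : ℝ) (hr : 0 < r)
    (hsep : K.Pairwise fun x y => 2 * r ≤ ‖x - y‖)
    (hbd : K ⊆ Metric.closedBall 0 ρ) : K.Finite := by
  by_contra h
  have hK : K.Infinite := h
  let f : ℕ ↪ K := hK.natEmbedding
  have hdisj : Pairwise (Function.onFun Disjoint fun n => Metric.ball ((f n : Esp d)) r) := by
    intro m n hmn
    have hne : (f m : Esp d) ≠ (f n : Esp d) := by
      intro hEq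
      exact hmn (f.injective (Subtype.ext hEq))
    have := hsep (f m).2 (f n).2 hne
    refine Metric.ball_disjoint_ball ?_
    rw [dist_eq_norm]; linarith
  have hvol : volume (⋃ n, Metric.ball ((f n : Esp d)) r) = ∑' n : ℕ, volume (Metric.ball ((f n : Esp d)) r) :=
    measure_iUnion hdisj fun n => measurableSet_ball
  have hconst : ∀ n : ℕ, volume (Metric.ball ((f n : Esp d)) r) = volume (Metric.ball (0 : Esp d) r) := by
    intro n; exact Measure.addHaar_ball_center volume _ r
  have htop : volume (⋃ n, Metric.ball ((f n : Esp d)) r) = ⊤ := by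
    rw [hvol]
    simp only [hconst]
    exact ENNReal.tsum_const_eq_top_of_ne_zero (Metric.measure_ball_pos volume 0 hr).ne'
  have hsub : (⋃ n, Metric.ball ((f n : Esp d)) r) ⊆ Metric.closedBall 0 (ρ + r) := by
    refine Set.iUnion_subset fun n x hx => ?_
    have h1 := hbd (f n).2
    simp only [Metric.mem_closedBall, Metric.mem_ball] at *
    calc dist x 0 ≤ dist x (f n : Esp d) + dist (f n : Esp d) 0 := dist_triangle _ _ _
      _ ≤ ρ + r := by linarith
  have := (measure_mono hsub).trans_lt (measure_closedBall_lt_top (μ := (volume : Measure (Esp d))) (x := (0:Esp d)) (r := ρ + r))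
  rw [htop] at this
  simp at this

private lemma coord_le {d : ℕ} (y : EuclideanSpace ℝ (Fin d)) (i : Fin d) : |y i| ≤ ‖y‖ := by
  rw [EuclideanSpace.norm_eq, ← Real.sqrt_sq_eq_abs]
  refine Real.sqrt_le_sqrt ?_
  have := Finset.single_le_sum (f := fun j => ‖y j‖ ^ 2) (fun j _ => by positivity)
    (Finset.mem_univ i)
  simpa using this


private lemma slab_vol {d : ℕ} (hd : 0 < d) (k : Esp d) (hk : k ≠ 0) (A R' : ℝ) (hA : 0 ≤ A)
    (hR' : 0 ≤ R') :
    volume {η : Esp d | ‖η‖ ≤ R' ∧ |⟪η, k⟫| ≤ A} ≤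
      ENNReal.ofReal (2 * (A / ‖k‖) * (2 * R') ^ (d - 1)) := by
  set i₀ : Fin d := ⟨0, hd⟩
  have hkn : (0:ℝ) < ‖k‖ := norm_pos_iff.mpr hk
  set u : Esp d := ‖k‖⁻¹ • k with hu_def
  have hu : ‖u‖ = 1 := by
    rw [hu_def, norm_smul, norm_inv, norm_norm, inv_mul_cancel₀ hkn.ne']
  have hON : Orthonormal ℝ (({i₀} : Set (Fin d)).restrict fun _ => u) := by
    constructor
    · intro i; exact hu
    · intro i j hij
      exact absurd (Subtype.ext ((i.2 : i.1 = i₀).trans (j.2 : j.1 = i₀).symm)) hij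
  obtain ⟨b, hb⟩ := hON.exists_orthonormalBasis_extension_of_card_eq
    (by simp [finrank_euclideanSpace])
  have hbi₀ : b i₀ = u := hb i₀ rfl
  set c : Fin d → ℝ := fun i => if i = i₀ then A / ‖k‖ else R' with hc
  set box : Set (Fin d → ℝ) := Set.univ.pi fun i => Set.Icc (-(c i)) (c i) with hbox
  have hboxm : MeasurableSet box := MeasurableSet.univ_pi fun i => measurableSet_Icc
  have hmp : MeasurePreserving
      (fun η : Esp d => ((MeasurableEquiv.toLp 2 (Fin d → ℝ)).symm) (b.repr η)) volume volume :=
    (EuclideanSpace.volume_preserving_symm_measurableEquiv_toLp (Fin d)).comp b.measurePreserving_repr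
  have hsub : {η : Esp d | ‖η‖ ≤ R' ∧ |⟪η, k⟫| ≤ A} ⊆
      (fun η : Esp d => ((MeasurableEquiv.toLp 2 (Fin d → ℝ)).symm) (b.repr η)) ⁻¹' box := by
    intro η hη
    obtain ⟨h1, h2⟩ := hη
    intro i _
    show -c i ≤ b.repr η i ∧ b.repr η i ≤ c i
    have hcoe : ((MeasurableEquiv.toLp 2 (Fin d → ℝ)).symm) (b.repr η) i = b.repr η i := rfl
    rw [← abs_le]
    by_cases hi : i = i₀
    · subst hi
      have : b.repr η i₀ = ⟪u, η⟫ := by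
        rw [← hbi₀, b.repr_apply_apply]
      rw [hc]
      simp only [if_pos rfl, this, hu_def, real_inner_smul_left]
      rw [abs_mul, abs_inv, abs_norm, real_inner_comm]
      calc ‖k‖⁻¹ * |⟪η, k⟫| ≤ ‖k‖⁻¹ * A := by
            exact mul_le_mul_of_nonneg_left h2 (by positivity)
        _ = A / ‖k‖ := by ring
    · have : |b.repr η i| ≤ ‖b.repr η‖ := coord_le _ _
      rw [b.repr.norm_map] at this
      rw [hc]; simp only [if_neg hi]
      exact this.trans h1
  calc volume {η : Esp d | ‖η‖ ≤ R' ∧ |⟪η, k⟫| ≤ A}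
      ≤ volume ((fun η : Esp d => ((MeasurableEquiv.toLp 2 (Fin d → ℝ)).symm) (b.repr η)) ⁻¹' box) :=
        measure_mono hsub
    _ = volume box := hmp.measure_preimage hboxm.nullMeasurableSet
    _ ≤ ENNReal.ofReal (2 * (A / ‖k‖) * (2 * R') ^ (d - 1)) := by
        rw [hbox, volume_pi_pi]
        simp only [Real.volume_Icc]
        have hci : ∀ i, (0:ℝ) ≤ c i := by
          intro i; rw [hc]; dsimp only; split <;> positivity
        have : ∀ i, ENNReal.ofReal (c i - -(c i)) = ENNReal.ofReal (2 * c i) := by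
          intro i; congr 1; ring
        simp only [this]
        rw [← ENNReal.ofReal_prod_of_nonneg (fun i _ => by positivity)]
        refine ENNReal.ofReal_le_ofReal ?_
        rw [← Finset.mul_prod_erase Finset.univ _ (Finset.mem_univ i₀)]
        simp only [hc, if_pos rfl]
        have : ∀ i ∈ Finset.univ.erase i₀, 2 * (if i = i₀ then A / ‖k‖ else R') = 2 * R' := by
          intro i hi; rw [if_neg (Finset.mem_erase.mp hi).1]
        rw [Finset.prod_congr rfl this, Finset.prod_const, Finset.card_erase_of_mem (Finset.mem_univ _), Finset.card_univ, Fintype.card_fin]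

private lemma sum_sep_le {d : ℕ} (r s : ℝ) (hr : 0 < r) (hds : (d : ℝ) < s) :
    ∃ S : ℝ, ∀ F : Finset (Esp d), (∀ k ∈ F, 2 * r ≤ ‖k‖) →
      ((F : Set (Esp d)).Pairwise fun x y => 2 * r ≤ ‖x - y‖) →
      ∑ k ∈ F, ‖k‖ ^ (-s) ≤ S := by
  have hg : Integrable (fun x : Esp d => (1 + ‖x‖) ^ (-s)) :=
    integrable_one_add_norm (by simpa [finrank_euclideanSpace] using hds)
  set v : ℝ := (volume (Metric.ball (0 : Esp d) r)).toReal with hv_def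
  have hv : 0 < v := ENNReal.toReal_pos (Metric.measure_ball_pos volume 0 hr).ne'
    measure_ball_lt_top.ne
  set c₁ : ℝ := 1 / (2 * r) + 3 / 2 with hc₁_def
  have hc₁ : 0 < c₁ := by positivity
  refine ⟨(∫ x : Esp d, (1 + ‖x‖) ^ (-s)) * c₁ ^ s / v, fun F hF hFsep => ?_⟩
  have key : ∀ k ∈ F, ‖k‖ ^ (-s) * (c₁ ^ (-s) * v) ≤
      ∫ x in Metric.ball k r, (1 + ‖x‖) ^ (-s) := by
    intro k hk
    have hk2 : 2 * r ≤ ‖k‖ := hF k hk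
    have hkpos : 0 < ‖k‖ := lt_of_lt_of_le (by linarith) hk2
    have hconst : ∀ x ∈ Metric.ball k r, (c₁ * ‖k‖) ^ (-s) ≤ (1 + ‖x‖) ^ (-s) := by
      intro x hx
      have hxr : ‖x - k‖ < r := by
        rw [← dist_eq_norm]; exact hx
      have h1 : ‖x‖ ≤ ‖k‖ + r := by
        calc ‖x‖ = ‖k + (x - k)‖ := by rw [show k + (x - k) = x by abel]
          _ ≤ ‖k‖ + ‖x - k‖ := norm_add_le _ _
          _ ≤ ‖k‖ + r := by linarith
      have h2 : 1 + ‖x‖ ≤ c₁ * ‖k‖ := by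
        have e1 : (1:ℝ) ≤ ‖k‖ / (2 * r) := by
          rw [le_div_iff₀ (by linarith)]; linarith
        have e2 : r ≤ ‖k‖ / 2 := by linarith
        have : c₁ * ‖k‖ = ‖k‖ / (2*r) + ‖k‖ + ‖k‖ / 2 := by
          rw [hc₁_def]; field_simp; ring
        rw [this]; linarith
      exact Real.rpow_le_rpow_of_nonpos (by positivity) h2 (by linarith)
    have := setIntegral_ge_of_const_le (μ := volume) measurableSet_ball
      measure_ball_lt_top.ne hconst hg.integrableOn
    have hvol : volume.real (Metric.ball k r) = v := by
      rw [hv_def, Measure.real, Measure.addHaar_ball_center]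
    rw [hvol, smul_eq_mul, mul_comm] at this
    calc ‖k‖ ^ (-s) * (c₁ ^ (-s) * v) = (c₁ * ‖k‖) ^ (-s) * v := by
          rw [Real.mul_rpow hc₁.le hkpos.le]; ring
      _ ≤ ∫ x in Metric.ball k r, (1 + ‖x‖) ^ (-s) := this
  have hdisj : (F : Set (Esp d)).Pairwise
      (Function.onFun Disjoint fun k => Metric.ball k r) := by
    intro x hx y hy hxy
    refine Metric.ball_disjoint_ball ?_
    rw [dist_eq_norm]; linarith [hFsep hx hy hxy]
  have hsum : ∑ k ∈ F, ∫ x in Metric.ball k r, (1 + ‖x‖) ^ (-s) ≤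
      ∫ x : Esp d, (1 + ‖x‖) ^ (-s) := by
    rw [← integral_biUnion_finset F (fun k _ => measurableSet_ball) hdisj
      (fun k _ => hg.integrableOn)]
    exact setIntegral_le_integral hg (Filter.Eventually.of_forall fun x => by positivity)
  have htot : ∑ k ∈ F, ‖k‖ ^ (-s) * (c₁ ^ (-s) * v) ≤ ∫ x : Esp d, (1 + ‖x‖) ^ (-s) :=
    le_trans (Finset.sum_le_sum key) hsum
  rw [← Finset.sum_mul] at htot
  have hpos : 0 < c₁ ^ (-s) * v := by
    have := Real.rpow_pos_of_pos hc₁ (-s); positivity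
  have hfin : ∑ k ∈ F, ‖k‖ ^ (-s) ≤ (∫ x : Esp d, (1 + ‖x‖) ^ (-s)) / (c₁ ^ (-s) * v) :=
    (le_div_iff₀ hpos).mpr htot
  refine hfin.trans_eq ?_
  rw [Real.rpow_neg hc₁.le]
  have h1 : (0:ℝ) < c₁ ^ s := Real.rpow_pos_of_pos hc₁ s
  field_simp


/-- Measure estimate of the (r-neighborhood of the) resonant set:
`|Ω^{(R,c)}_r| ≲ R^{d+δ−1}`. -/
theorem resonant_set_measure_estimate
    {d : ℕ} (hd : 1 ≤ d) (e : Module.Basis (Fin d) ℝ (Esp d))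
    (δ ε τ γ r : ℝ) (hδ₀ : 0 < δ) (hδ₁ : δ < 1) (hε₀ : 0 < ε) (hτ₀ : 0 < τ)
    (hr : r = (1/2) * sInf {t : ℝ | ∃ x ∈ dualLattice e, ∃ y ∈ dualLattice e,
      x ≠ y ∧ t = ‖x - y‖})
    (hγ₀ : 0 < γ) (hγr : γ < r)
    (hε : ε ≤ δ / (1 + τ)) (hτ : (d : ℝ) - 1 < τ)
    (Ω : Set (Esp d))
    (hΩ : Ω = {ξ : Esp d | ∀ k ∈ dualLattice e, k ≠ 0 → ‖k‖ < jb ξ ^ ε →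
      2 * γ * jb ξ ^ δ / ‖k‖ ^ τ < |(inner ℝ ξ k : ℝ)|}) :
    ∃ C : ℝ, ∀ R : ℝ,
      (r * 2 ^ (ε * (τ + 1)) / (2 * γ)) ^ (δ - ε * (τ + 1))⁻¹ < R →
      (volume (nbhdSet (Metric.ball (0 : Esp d) R \ Ω) r)).toReal ≤
        C * R ^ ((d : ℝ) + δ - 1) := by
  have hr0 : 0 < r := hγ₀.trans hγr
  have hd0 : 0 < d := hd
  -- separation of the dual lattice
  have hsep : ∀ x ∈ dualLattice e, ∀ y ∈ dualLattice e, x ≠ y → 2 * r ≤ ‖x - y‖ := by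
    intro x hx y hy hxy
    have hmem : ‖x - y‖ ∈ {t : ℝ | ∃ x ∈ dualLattice e, ∃ y ∈ dualLattice e,
        x ≠ y ∧ t = ‖x - y‖} := ⟨x, hx, y, hy, hxy, rfl⟩
    have hbdd : BddBelow {t : ℝ | ∃ x ∈ dualLattice e, ∃ y ∈ dualLattice e,
        x ≠ y ∧ t = ‖x - y‖} := by
      refine ⟨0, fun t ht => ?_⟩
      obtain ⟨a, _, b, _, _, rfl⟩ := ht
      exact norm_nonneg _
    have := csInf_le hbdd hmem
    rw [hr]; linarith
  have h0mem : (0 : Esp d) ∈ dualLattice e := by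
    intro x hx
    exact ⟨0, by simp⟩
  have hksep : ∀ k ∈ dualLattice e, k ≠ 0 → 2 * r ≤ ‖k‖ := by
    intro k hk hk0
    simpa using hsep k hk 0 h0mem hk0
  -- the summation constant
  obtain ⟨S, hS⟩ := sum_sep_le (d := d) r (τ + 1) hr0 (by linarith)
  have hS0 : 0 ≤ S := by simpa using hS ∅ (by simp) (by simp)
  -- threshold
  set t₀ : ℝ := (r * 2 ^ (ε * (τ + 1)) / (2 * γ)) ^ (δ - ε * (τ + 1))⁻¹ with ht₀_def
  have ht₀ : 0 < t₀ := by
    apply Real.rpow_pos_of_pos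
    have : (0:ℝ) < 2 ^ (ε * (τ + 1)) := Real.rpow_pos_of_pos two_pos _
    positivity
  -- constants
  set c2 : ℝ := 4 * γ + 2 * r with hc2_def
  have hc2 : 0 < c2 := by positivity
  set Cbig : ℝ := 2 * c2 * (2 * (1 + r)) ^ (d - 1) * S with hCbig_def
  have hCbig0 : 0 ≤ Cbig := by positivity
  set Csmall : ℝ := (volume (Metric.closedBall (0 : Esp d) (1 + r))).toReal /
      t₀ ^ ((d : ℝ) + δ - 1) with hCsmall_def
  have hexp0 : 0 ≤ (d : ℝ) + δ - 1 := by
    have : (1:ℝ) ≤ (d:ℝ) := by exact_mod_cast hd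
    linarith
  have hCsmall0 : 0 ≤ Csmall := by
    apply div_nonneg ENNReal.toReal_nonneg (Real.rpow_nonneg ht₀.le _)
  refine ⟨Cbig + Csmall, fun R hR => ?_⟩
  have hR0 : 0 < R := ht₀.trans hR
  have hRpow : t₀ ^ ((d : ℝ) + δ - 1) ≤ R ^ ((d : ℝ) + δ - 1) :=
    Real.rpow_le_rpow ht₀.le hR.le hexp0
  have hRpow0 : 0 ≤ R ^ ((d : ℝ) + δ - 1) := Real.rpow_nonneg hR0.le _
  rcases le_or_gt R 1 with hR1 | hR1
  · -- small R : crude bound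
    have hsub : nbhdSet (Metric.ball (0 : Esp d) R \ Ω) r ⊆
        Metric.closedBall (0 : Esp d) (1 + r) := by
      intro x hx
      obtain ⟨y, hy, hxy⟩ := Set.mem_iUnion₂.mp hx
      have h1 : ‖y‖ < R := by simpa [dist_zero_right] using hy.1
      have h2 : dist x y < r := hxy
      rw [Metric.mem_closedBall, dist_zero_right]
      calc ‖x‖ ≤ ‖y‖ + ‖x - y‖ := by
            rw [show x = y + (x - y) by abel]; exact (norm_add_le _ _).trans (by rw [show y + (x-y) - y = x - y by abel])
        _ ≤ 1 + r := by
            rw [← dist_eq_norm] at *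
            have := hxy
            linarith [hxy]
    have hv : (volume (nbhdSet (Metric.ball (0 : Esp d) R \ Ω) r)).toReal ≤
        (volume (Metric.closedBall (0 : Esp d) (1 + r))).toReal := by
      apply ENNReal.toReal_mono (measure_closedBall_lt_top (μ := (volume : Measure (Esp d)))).ne
      exact measure_mono hsub
    have : (volume (Metric.closedBall (0 : Esp d) (1 + r))).toReal ≤
        Csmall * R ^ ((d : ℝ) + δ - 1) := by
      rw [hCsmall_def, div_mul_eq_mul_div, le_div_iff₀ (Real.rpow_pos_of_pos ht₀ _)]
      calc (volume (Metric.closedBall (0:Esp d) (1 + r))).toReal * t₀ ^ ((d:ℝ) + δ - 1)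
          ≤ (volume (Metric.closedBall (0:Esp d) (1 + r))).toReal * R ^ ((d:ℝ) + δ - 1) :=
            mul_le_mul_of_nonneg_left hRpow ENNReal.toReal_nonneg
        _ = _ := by ring
    nlinarith [mul_nonneg hCbig0 hRpow0]
  · -- main case : R > 1
    set J : ℝ := Real.sqrt (1 + R ^ 2) with hJ_def
    have hJ1 : 1 ≤ J := by
      calc (1:ℝ) = Real.sqrt 1 := Real.sqrt_one.symm
        _ ≤ J := Real.sqrt_le_sqrt (by nlinarith [sq_nonneg R])
    have hJR : R ≤ J := by
      calc R = Real.sqrt (R ^ 2) := (Real.sqrt_sq hR0.le).symm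
        _ ≤ J := Real.sqrt_le_sqrt (by nlinarith)
    have hJ2R : J ≤ 2 * R := by
      have h := Real.sqrt_le_sqrt (show 1 + R ^ 2 ≤ (2 * R) ^ 2 by nlinarith)
      rwa [Real.sqrt_sq (by linarith)] at h
    -- the finite set of relevant lattice points
    set K : Set (Esp d) := {k | k ∈ dualLattice e ∧ k ≠ 0 ∧ ‖k‖ ≤ J ^ ε} with hK_def
    have hKfin : K.Finite := by
      refine finite_of_sep K r (J ^ ε) hr0 ?_ ?_
      · intro x hx y hy hxy; exact hsep x hx.1 y hy.1 hxy
      · intro k hk; rw [Metric.mem_closedBall, dist_zero_right]; exact hk.2.2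
    set F : Finset (Esp d) := hKfin.toFinset with hF_def
    have hFmem : ∀ k, k ∈ F ↔ k ∈ dualLattice e ∧ k ≠ 0 ∧ ‖k‖ ≤ J ^ ε := by
      intro k; rw [hF_def, Set.Finite.mem_toFinset]; rfl
    -- slabs
    set A : Esp d → ℝ := fun k => 2 * γ * J ^ δ / ‖k‖ ^ τ + r * ‖k‖ with hA_def
    set Slab : Esp d → Set (Esp d) := fun k => {η : Esp d | ‖η‖ ≤ R + r ∧ |⟪η, k⟫| ≤ A k}
      with hSlab_def
    -- covering
    have hcover : nbhdSet (Metric.ball (0 : Esp d) R \ Ω) r ⊆ ⋃ k ∈ F, Slab k := by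
      intro ξ' hξ'
      obtain ⟨ξ, hξ, hξξ'⟩ := Set.mem_iUnion₂.mp hξ'
      obtain ⟨hξR, hξΩ⟩ := hξ
      have hξR' : ‖ξ‖ < R := by simpa [dist_zero_right] using hξR
      rw [hΩ] at hξΩ
      simp only [Set.mem_setOf_eq, not_forall] at hξΩ
      push_neg at hξΩ
      obtain ⟨k, hkD, hk0, hkb, hki⟩ := hξΩ
      have hjb1 : 1 ≤ jb ξ := by
        have h := Real.sqrt_le_sqrt (show (1:ℝ) ≤ 1 + ‖ξ‖ ^ 2 by nlinarith [sq_nonneg ‖ξ‖])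
        rw [Real.sqrt_one] at h
        exact h.trans_eq rfl
      have hjbJ : jb ξ ≤ J := by
        unfold jb
        exact Real.sqrt_le_sqrt (by nlinarith [norm_nonneg ξ])
      have hjbJε : jb ξ ^ ε ≤ J ^ ε := Real.rpow_le_rpow (by linarith) hjbJ hε₀.le
      have hjbJδ : jb ξ ^ δ ≤ J ^ δ := Real.rpow_le_rpow (by linarith) hjbJ hδ₀.le
      have hkF : k ∈ F := (hFmem k).mpr ⟨hkD, hk0, (hkb.trans_le hjbJε).le⟩
      have hkn : 0 < ‖k‖ := norm_pos_iff.mpr hk0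
      refine Set.mem_iUnion₂.mpr ⟨k, hkF, ?_, ?_⟩
      · -- norm bound
        have hdist : ‖ξ' - ξ‖ < r := by rw [← dist_eq_norm]; exact hξξ'
        calc ‖ξ'‖ = ‖ξ + (ξ' - ξ)‖ := by rw [show ξ + (ξ' - ξ) = ξ' by abel]
          _ ≤ ‖ξ‖ + ‖ξ' - ξ‖ := norm_add_le _ _
          _ ≤ R + r := by linarith
      · -- inner product bound
        have hdist : ‖ξ' - ξ‖ < r := by rw [← dist_eq_norm]; exact hξξ'
        have hsplit : (⟪ξ', k⟫ : ℝ) = ⟪ξ, k⟫ + ⟪ξ' - ξ, k⟫ := by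
          rw [← inner_add_left, show ξ + (ξ' - ξ) = ξ' by abel]
        have hCS : |(⟪ξ' - ξ, k⟫ : ℝ)| ≤ ‖ξ' - ξ‖ * ‖k‖ := abs_real_inner_le_norm _ _
        have hkτ : 0 < ‖k‖ ^ τ := Real.rpow_pos_of_pos hkn τ
        have h1 : 2 * γ * jb ξ ^ δ / ‖k‖ ^ τ ≤ 2 * γ * J ^ δ / ‖k‖ ^ τ := by
          refine (div_le_div_iff_of_pos_right hkτ).mpr ?_
          nlinarith [hjbJδ, Real.rpow_nonneg (le_trans zero_le_one hjb1) δ]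
        calc |(⟪ξ', k⟫ : ℝ)| ≤ |(⟪ξ, k⟫ : ℝ)| + |(⟪ξ' - ξ, k⟫ : ℝ)| := by
              rw [hsplit]; exact abs_add_le _ _
          _ ≤ 2 * γ * jb ξ ^ δ / ‖k‖ ^ τ + ‖ξ' - ξ‖ * ‖k‖ := by
              have := hCS
              linarith [hki]
          _ ≤ A k := by
              have h2 : ‖ξ' - ξ‖ * ‖k‖ ≤ r * ‖k‖ :=
                mul_le_mul_of_nonneg_right hdist.le hkn.le
              simp only [hA_def]
              linarith [h1]
    -- properties of F
    have hF2r : ∀ k ∈ F, 2 * r ≤ ‖k‖ := fun k hk =>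
      hksep k ((hFmem k).mp hk).1 ((hFmem k).mp hk).2.1
    have hFsep2 : (F : Set (Esp d)).Pairwise fun x y => 2 * r ≤ ‖x - y‖ := by
      intro x hx y hy hxy
      exact hsep x ((hFmem x).mp hx).1 y ((hFmem y).mp hy).1 hxy
    have hSsum : ∑ k ∈ F, ‖k‖ ^ (-(τ + 1)) ≤ S := hS F hF2r hFsep2
    -- exponent facts
    set a : ℝ := ε * (τ + 1) with ha_def
    have ha0 : 0 < a := by positivity
    have haδ : a ≤ δ := by
      rw [ha_def]
      rw [div_eq_mul_inv] at hε
      have h1τ : (0:ℝ) < 1 + τ := by linarith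
      calc ε * (τ + 1) ≤ δ * (1 + τ)⁻¹ * (τ + 1) := by
            exact mul_le_mul_of_nonneg_right hε (by linarith)
        _ = δ := by
            field_simp
            ring
    have hJδ2 : J ^ δ ≤ 2 * R ^ δ := by
      calc J ^ δ ≤ (2 * R) ^ δ := Real.rpow_le_rpow (by linarith) hJ2R hδ₀.le
        _ = 2 ^ δ * R ^ δ := Real.mul_rpow two_pos.le hR0.le
        _ ≤ 2 * R ^ δ := by
            have h2δ : (2:ℝ) ^ δ ≤ 2 := by
              calc (2:ℝ) ^ δ ≤ 2 ^ (1:ℝ) :=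
                    Real.rpow_le_rpow_of_exponent_le one_le_two hδ₁.le
                _ = 2 := Real.rpow_one 2
            exact mul_le_mul_of_nonneg_right h2δ (Real.rpow_nonneg hR0.le δ)
    have hJa2 : J ^ a ≤ 2 * R ^ δ := by
      calc J ^ a ≤ (2 * R) ^ a := Real.rpow_le_rpow (by linarith) hJ2R ha0.le
        _ = 2 ^ a * R ^ a := Real.mul_rpow two_pos.le hR0.le
        _ ≤ 2 * R ^ a := by
            have h2a : (2:ℝ) ^ a ≤ 2 := by
              calc (2:ℝ) ^ a ≤ 2 ^ (1:ℝ) :=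
                    Real.rpow_le_rpow_of_exponent_le one_le_two (by linarith)
                _ = 2 := Real.rpow_one 2
            exact mul_le_mul_of_nonneg_right h2a (Real.rpow_nonneg hR0.le a)
        _ ≤ 2 * R ^ δ := by
            have := Real.rpow_le_rpow_of_exponent_le hR1.le haδ
            linarith
    -- per-term bound
    set B : ℝ := 2 * c2 * (2 * (1 + r)) ^ (d - 1) * (R ^ δ * R ^ (d - 1)) with hB_def
    have hRδ0 : 0 ≤ R ^ δ := Real.rpow_nonneg hR0.le δ
    have hB0 : 0 ≤ B := by
      rw [hB_def]; positivity
    have hterm : ∀ k ∈ F, 2 * (A k / ‖k‖) * (2 * (R + r)) ^ (d - 1) ≤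
        B * ‖k‖ ^ (-(τ + 1)) := by
      intro k hk
      obtain ⟨hkD, hk0, hkJ⟩ := (hFmem k).mp hk
      have hkn : 0 < ‖k‖ := norm_pos_iff.mpr hk0
      have hknτ : 0 < ‖k‖ ^ τ := Real.rpow_pos_of_pos hkn τ
      have hknτ' : 0 ≤ ‖k‖ ^ (-τ) := Real.rpow_nonneg hkn.le _
      have hknτ1 : 0 ≤ ‖k‖ ^ (-(τ+1)) := Real.rpow_nonneg hkn.le _
      -- A k ≤ c2 * R ^ δ * ‖k‖ ^ (-τ)
      have hAk : A k ≤ c2 * R ^ δ * ‖k‖ ^ (-τ) := by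
        have part1 : 2 * γ * J ^ δ / ‖k‖ ^ τ ≤ 4 * γ * R ^ δ * ‖k‖ ^ (-τ) := by
          rw [Real.rpow_neg hkn.le, div_eq_mul_inv]
          have hinv : (0:ℝ) ≤ (‖k‖ ^ τ)⁻¹ := by positivity
          have : 2 * γ * J ^ δ ≤ 4 * γ * R ^ δ := by nlinarith [hJδ2]
          exact mul_le_mul_of_nonneg_right this hinv
        have part2 : r * ‖k‖ ≤ 2 * r * R ^ δ * ‖k‖ ^ (-τ) := by
          have hk1 : ‖k‖ = ‖k‖ ^ (τ + 1) * ‖k‖ ^ (-τ) := by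
            rw [← Real.rpow_add hkn]
            norm_num
          have hk2 : ‖k‖ ^ (τ + 1) ≤ J ^ a := by
            calc ‖k‖ ^ (τ + 1) ≤ (J ^ ε) ^ (τ + 1) :=
                  Real.rpow_le_rpow hkn.le hkJ (by linarith)
              _ = J ^ a := by rw [ha_def, ← Real.rpow_mul (by linarith : (0:ℝ) ≤ J)]
          calc r * ‖k‖ = r * (‖k‖ ^ (τ + 1) * ‖k‖ ^ (-τ)) := by rw [← hk1]
            _ ≤ r * ((2 * R ^ δ) * ‖k‖ ^ (-τ)) := by
                have := hk2.trans hJa2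
                have hmul : ‖k‖ ^ (τ + 1) * ‖k‖ ^ (-τ) ≤ (2 * R ^ δ) * ‖k‖ ^ (-τ) :=
                  mul_le_mul_of_nonneg_right this hknτ'
                exact mul_le_mul_of_nonneg_left hmul hr0.le
            _ = 2 * r * R ^ δ * ‖k‖ ^ (-τ) := by ring
        have : A k = 2 * γ * J ^ δ / ‖k‖ ^ τ + r * ‖k‖ := by simp only [hA_def]
        rw [this, hc2_def]
        calc 2 * γ * J ^ δ / ‖k‖ ^ τ + r * ‖k‖
            ≤ 4 * γ * R ^ δ * ‖k‖ ^ (-τ) + 2 * r * R ^ δ * ‖k‖ ^ (-τ) := by linarith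
          _ = (4 * γ + 2 * r) * R ^ δ * ‖k‖ ^ (-τ) := by ring
      have hAkdiv : A k / ‖k‖ ≤ c2 * R ^ δ * ‖k‖ ^ (-(τ + 1)) := by
        have h1 : A k / ‖k‖ ≤ c2 * R ^ δ * ‖k‖ ^ (-τ) / ‖k‖ :=
          (div_le_div_iff_of_pos_right hkn).mpr hAk
        refine h1.trans_eq ?_
        rw [div_eq_mul_inv,
          show (‖k‖)⁻¹ = ‖k‖ ^ (-1:ℝ) from (Real.rpow_neg_one _).symm,
          mul_assoc, ← Real.rpow_add hkn]
        norm_num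
        left
        congr 1
        ring
      have hpow : (2 * (R + r)) ^ (d - 1) ≤ (2 * (1 + r)) ^ (d - 1) * R ^ (d - 1) := by
        rw [← mul_pow]
        apply pow_le_pow_left₀ (by linarith)
        nlinarith [hr0]
      have hApos : 0 ≤ A k / ‖k‖ := by
        have : 0 ≤ A k := by
          have hJδ0 : 0 ≤ J ^ δ := Real.rpow_nonneg (by linarith) δ
          simp only [hA_def]
          positivity
        positivity
      calc 2 * (A k / ‖k‖) * (2 * (R + r)) ^ (d - 1)
          ≤ 2 * (c2 * R ^ δ * ‖k‖ ^ (-(τ + 1))) * (2 * (R + r)) ^ (d - 1) := by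
            have hp : (0:ℝ) ≤ (2 * (R + r)) ^ (d - 1) := by positivity
            exact mul_le_mul_of_nonneg_right (by linarith) hp
        _ ≤ 2 * (c2 * R ^ δ * ‖k‖ ^ (-(τ + 1))) * ((2 * (1 + r)) ^ (d - 1) * R ^ (d - 1)) := by
            refine mul_le_mul_of_nonneg_left hpow ?_
            positivity
        _ = B * ‖k‖ ^ (-(τ + 1)) := by rw [hB_def]; ring
    -- slab volume bounds
    have hslab : ∀ k ∈ F, volume (Slab k) ≤
        ENNReal.ofReal (2 * (A k / ‖k‖) * (2 * (R + r)) ^ (d - 1)) := by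
      intro k hk
      obtain ⟨hkD, hk0, hkJ⟩ := (hFmem k).mp hk
      have hkn : 0 < ‖k‖ := norm_pos_iff.mpr hk0
      have hA0 : 0 ≤ A k := by
        have hJδ0 : 0 ≤ J ^ δ := Real.rpow_nonneg (by linarith) δ
        have hknτ : 0 < ‖k‖ ^ τ := Real.rpow_pos_of_pos hkn τ
        simp only [hA_def]
        positivity
      exact slab_vol hd0 k hk0 (A k) (R + r) hA0 (by linarith)
    -- put everything together
    have hvol : volume (nbhdSet (Metric.ball (0 : Esp d) R \ Ω) r) ≤
        ENNReal.ofReal (B * S) := by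
      calc volume (nbhdSet (Metric.ball (0 : Esp d) R \ Ω) r)
          ≤ volume (⋃ k ∈ F, Slab k) := measure_mono hcover
        _ ≤ ∑ k ∈ F, volume (Slab k) := measure_biUnion_finset_le F Slab
        _ ≤ ∑ k ∈ F, ENNReal.ofReal (2 * (A k / ‖k‖) * (2 * (R + r)) ^ (d - 1)) :=
            Finset.sum_le_sum hslab
        _ ≤ ∑ k ∈ F, ENNReal.ofReal (B * ‖k‖ ^ (-(τ + 1))) :=
            Finset.sum_le_sum fun k hk => ENNReal.ofReal_le_ofReal (hterm k hk)
        _ = ENNReal.ofReal (∑ k ∈ F, B * ‖k‖ ^ (-(τ + 1))) := by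
            rw [ENNReal.ofReal_sum_of_nonneg]
            intro k hk
            exact mul_nonneg hB0 (Real.rpow_nonneg (norm_nonneg k) _)
        _ ≤ ENNReal.ofReal (B * S) := by
            apply ENNReal.ofReal_le_ofReal
            rw [← Finset.mul_sum]
            exact mul_le_mul_of_nonneg_left hSsum hB0
    -- convert and finish
    have hBS : B * S = Cbig * R ^ ((d : ℝ) + δ - 1) := by
      have hd1 : ((d - 1 : ℕ) : ℝ) = (d : ℝ) - 1 := by
        push_cast [hd]; ring
      have hRd : (R : ℝ) ^ (d - 1 : ℕ) = R ^ ((d : ℝ) - 1) := by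
        rw [← Real.rpow_natCast R (d - 1), hd1]
      have hRδd : R ^ δ * R ^ ((d:ℝ) - 1) = R ^ ((d : ℝ) + δ - 1) := by
        rw [← Real.rpow_add hR0]
        ring_nf
      rw [hB_def, hCbig_def, hRd, hRδd]
      ring
    rw [hBS] at hvol
    have hfin : (volume (nbhdSet (Metric.ball (0 : Esp d) R \ Ω) r)).toReal ≤
        Cbig * R ^ ((d : ℝ) + δ - 1) :=
      ENNReal.toReal_le_of_le_ofReal (mul_nonneg hCbig0 hRpow0) hvol
    nlinarith [mul_nonneg hCsmall0 hRpow0]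
end
end

section
/- Assume ε ≤ δ/(1+τ) and τ > d−1. Then there is a constant C such that for all R > [r·2^{ε(τ+1)}/(2γ)]^{1/(δ−ε(τ+1))} one has 1 − ♯(Ω ∩ B_R ∩ Γ*)/♯(B_R ∩ Γ*) ≤ C·R^{δ−1}. In particular, since 0 < δ < 1, lim_{R→∞} ♯(Ω ∩ B_R ∩ Γ*)/♯(B_R ∩ Γ*) = 1, i.e. Ω ∩ Γ* has density one in Γ*. -/
open scoped BigOperators RealInnerProductSpace
open MeasureTheory

noncomputable section

namespace NRD
attribute [local instance] Classical.propDecidable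
variable {d : ℕ} (e : Module.Basis (Fin d) ℝ (Esp d))

/-- the rescaled "lowering" map -/
def Lmap : Esp d →ₗ[ℝ] (Fin d → ℝ) :=
  LinearMap.pi fun i => ((2 * Real.pi)⁻¹ • (innerSL ℝ (e i)).toLinearMap)

lemma Lmap_apply (x : Esp d) (i : Fin d) : Lmap e x i = (2 * Real.pi)⁻¹ * ⟪e i, x⟫ := rfl

lemma Lmap_injective : Function.Injective (Lmap e) := by
  rw [← LinearMap.ker_eq_bot, LinearMap.ker_eq_bot']
  intro x hx
  have h : ∀ i, ⟪e i, x⟫ = 0 := by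
    intro i
    have := congrFun hx i
    simp only [Lmap_apply, Pi.zero_apply] at this
    have h2 : (2 * Real.pi)⁻¹ ≠ 0 := by positivity
    field_simp at this
    simpa using this
  have hx0 : ⟪(∑ i, e.repr x i • e i : Esp d), x⟫ = 0 := by
    rw [sum_inner]
    refine Finset.sum_eq_zero fun i _ => ?_
    rw [real_inner_smul_left, h, mul_zero]
  rw [e.sum_repr x] at hx0
  exact inner_self_eq_zero.mp hx0

def Leq : Esp d ≃ₗ[ℝ] (Fin d → ℝ) :=
  (Lmap e).linearEquivOfInjective (Lmap_injective e) (by simp [finrank_euclideanSpace_fin])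

lemma Leq_apply (x : Esp d) : Leq e x = Lmap e x := rfl

/-- basis of the dual lattice -/
def bF : Module.Basis (Fin d) ℝ (Esp d) := (Pi.basisFun ℝ (Fin d)).map (Leq e).symm

lemma inner_e_bF (i j : Fin d) : ⟪e i, bF e j⟫ = if i = j then 2 * Real.pi else 0 := by
  have h : Lmap e (bF e j) = Pi.single j 1 := by
    have : Leq e (bF e j) = Pi.single j 1 := by
      simp [bF, Module.Basis.map_apply, Pi.basisFun_apply]
    rw [← Leq_apply, this]
  have h2 := congrFun h i
  rw [Lmap_apply] at h2
  have hπ : (2 * Real.pi) ≠ 0 := by positivity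
  have : ⟪e i, bF e j⟫ = 2 * Real.pi * ((Pi.single j 1 : Fin d → ℝ) i) := by
    field_simp at h2 ⊢
    linarith [h2]
  rw [this, Pi.single_apply]
  by_cases hij : i = j <;> simp [hij]

/-- The integer-combination map onto the dual lattice. -/
def Φ (n : Fin d → ℤ) : Esp d := ∑ i, (n i : ℝ) • bF e i

lemma inner_e_Φ (i : Fin d) (n : Fin d → ℤ) : ⟪e i, Φ e n⟫ = 2 * Real.pi * n i := by
  rw [Φ, inner_sum]
  rw [Finset.sum_eq_single i]
  · rw [real_inner_smul_right, inner_e_bF]; simp [mul_comm]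
  · intro j _ hj
    rw [real_inner_smul_right, inner_e_bF]
    simp [(Ne.symm hj : ¬ i = j)]
  · simp

lemma Φ_injective : Function.Injective (Φ e) := by
  intro n m h
  funext i
  have h1 := inner_e_Φ e i n
  have h2 := inner_e_Φ e i m
  rw [h] at h1
  have hπ : 2 * Real.pi ≠ 0 := by positivity
  have : (n i : ℝ) = m i := by
    have := h1.symm.trans h2
    exact mul_left_cancel₀ hπ this
  exact_mod_cast this

lemma Φ_zero : Φ e 0 = 0 := by simp [Φ]

lemma dualLattice_eq_range : dualLattice e = Set.range (Φ e) := by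
  ext b
  constructor
  · intro hb
    have he : ∀ i : Fin d, e i ∈ lattice e := by
      intro i
      refine ⟨Pi.single i 1, ?_⟩
      rw [Finset.sum_eq_single i] <;> simp +contextual [Pi.single_apply]
    choose n hn using fun i => hb (e i) (he i)
    refine ⟨n, ?_⟩
    have key : ∀ i, ⟪e i, Φ e n - b⟫ = 0 := by
      intro i
      rw [inner_sub_right, inner_e_Φ, real_inner_comm, hn i, sub_self]
    have hx0 : ⟪(∑ i, e.repr (Φ e n - b) i • e i : Esp d), Φ e n - b⟫ = 0 := by
      rw [sum_inner]
      refine Finset.sum_eq_zero fun i _ => ?_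
      rw [real_inner_smul_left, key, mul_zero]
    rw [e.sum_repr] at hx0
    have := inner_self_eq_zero.mp hx0
    exact sub_eq_zero.mp this
  · rintro ⟨n, rfl⟩
    rintro γ ⟨k, rfl⟩
    refine ⟨∑ i, k i * n i, ?_⟩
    rw [inner_sum]
    push_cast
    rw [Finset.mul_sum]
    refine Finset.sum_congr rfl fun i _ => ?_
    rw [real_inner_smul_right, real_inner_comm, inner_e_Φ]
    ring

/-- integers in an interval of length L -/
lemma int_interval_count (S : Finset ℤ) (a L : ℝ) (hL : 0 ≤ L)
    (h : ∀ x ∈ S, a ≤ (x:ℝ) ∧ (x:ℝ) ≤ a + L) :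
    (S.card : ℝ) ≤ L + 1 := by
  have hsub : S ⊆ Finset.Icc ⌈a⌉ ⌊a + L⌋ := by
    intro x hx
    rcases h x hx with ⟨h1, h2⟩
    rw [Finset.mem_Icc]
    exact ⟨Int.ceil_le.mpr h1, Int.le_floor.mpr h2⟩
  have hcard := Finset.card_le_card hsub
  rw [Int.card_Icc] at hcard
  have h3 : ((⌊a + L⌋ + 1 - ⌈a⌉).toNat : ℝ) ≤ L + 1 := by
    rcases le_or_gt (⌊a + L⌋ + 1 - ⌈a⌉) 0 with hle | hlt
    · have h0 : (⌊a + L⌋ + 1 - ⌈a⌉).toNat = 0 := Int.toNat_of_nonpos hle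
      rw [h0]; simp; linarith
    · have h0 : ((⌊a + L⌋ + 1 - ⌈a⌉).toNat : ℤ) = ⌊a + L⌋ + 1 - ⌈a⌉ :=
        Int.toNat_of_nonneg hlt.le
      have h0' : ((⌊a + L⌋ + 1 - ⌈a⌉).toNat : ℝ) = (⌊a + L⌋ : ℝ) + 1 - (⌈a⌉ : ℝ) := by
        exact_mod_cast congrArg (Int.cast : ℤ → ℝ) h0
      rw [h0']
      have := Int.floor_le (a + L)
      have := Int.le_ceil a
      linarith
  calc (S.card : ℝ) ≤ ((⌊a + L⌋ + 1 - ⌈a⌉).toNat : ℝ) := by exact_mod_cast hcard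
  _ ≤ L + 1 := h3


def box (M : ℕ) : Finset (Fin d → ℤ) := Fintype.piFinset fun _ => Finset.Icc (-(M:ℤ)) M

lemma mem_box {M : ℕ} {n : Fin d → ℤ} : n ∈ (box M : Finset (Fin d → ℤ)) ↔ ∀ i, |n i| ≤ M := by
  simp [box, Fintype.mem_piFinset, abs_le]

lemma card_Icc_int (M : ℕ) : (Finset.Icc (-(M:ℤ)) M).card = 2 * M + 1 := by
  rw [Int.card_Icc]; omega

lemma card_box (M : ℕ) : (box M : Finset (Fin d → ℤ)).card = (2 * M + 1) ^ d := by
  rw [box, Fintype.card_piFinset, Finset.prod_congr rfl (fun i _ => card_Icc_int M),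
    Finset.prod_const, Finset.card_univ, Fintype.card_fin]

/-- fixed-coordinate sub-box cardinality -/
lemma card_fixed_box (M : ℕ) (i₀ : Fin d) (v : ℤ) :
    (Fintype.piFinset fun i => if i = i₀ then ({v} : Finset ℤ) else Finset.Icc (-(M:ℤ)) M).card
      = (2 * M + 1) ^ (d - 1) := by
  rw [Fintype.card_piFinset]
  have h1 : ∀ i : Fin d, (if i = i₀ then ({v} : Finset ℤ) else Finset.Icc (-(M:ℤ)) M).card
      = if i = i₀ then 1 else 2 * M + 1 := by
    intro i; split
    · simp
    · exact card_Icc_int M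
  rw [Finset.prod_congr rfl fun i _ => h1 i,
    Finset.prod_eq_mul_prod_sdiff_singleton_of_mem (Finset.mem_univ i₀)]
  have h2 : ∀ i ∈ Finset.univ \ {i₀}, (if i = i₀ then 1 else 2 * M + 1) = 2 * M + 1 := by
    intro i hi
    rw [Finset.mem_sdiff, Finset.mem_singleton] at hi
    simp [hi.2]
  rw [Finset.prod_congr rfl h2, Finset.prod_const, if_pos rfl, one_mul]
  congr 1
  rw [Finset.card_sdiff_of_subset (by simp), Finset.card_univ, Fintype.card_fin, Finset.card_singleton]

/-- slab counting -/
lemma slab_card (M : ℕ) (c : Fin d → ℝ) (i₀ : Fin d) (hc : c i₀ ≠ 0) (W : ℝ) (hW : 0 ≤ W)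
    (S : Finset (Fin d → ℤ)) (hS : S ⊆ box M)
    (hcond : ∀ n ∈ S, |∑ i, (n i : ℝ) * c i| ≤ W) :
    (S.card : ℝ) ≤ (2 * W / |c i₀| + 1) * ((2 * M + 1) ^ (d - 1) : ℕ) := by
  set L : ℝ := 2 * W / |c i₀| with hLdef
  have hc' : 0 < |c i₀| := abs_pos.mpr hc
  have hL : 0 ≤ L := by positivity
  set ψ : (Fin d → ℤ) → (Fin d → ℤ) := fun n => Function.update n i₀ 0 with hψ
  set t : Finset (Fin d → ℤ) :=
    Fintype.piFinset fun i => if i = i₀ then ({0} : Finset ℤ) else Finset.Icc (-(M:ℤ)) M with ht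
  have hmaps : ∀ n ∈ S, ψ n ∈ t := by
    intro n hn
    rw [ht, Fintype.mem_piFinset]
    intro i
    by_cases hi : i = i₀
    · simp [hψ, hi]
    · simp only [hψ, Function.update_apply, if_neg hi, if_neg hi]
      have h2 := abs_le.mp ((mem_box.mp (hS hn)) i)
      exact Finset.mem_Icc.mpr ⟨h2.1, h2.2⟩
  set K : ℕ := ⌊L⌋₊ + 1 with hK
  have hfib : ∀ b ∈ t, (S.filter fun n => ψ n = b).card ≤ K := by
    intro b hb
    set F := S.filter fun n => ψ n = b with hF
    have hinj : Set.InjOn (fun n : Fin d → ℤ => n i₀) F := by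
      intro n hn n' hn' hval
      rw [hF, Finset.coe_filter, Set.mem_setOf_eq] at hn hn'
      funext i
      by_cases hi : i = i₀
      · rw [hi]; exact hval
      · have h1 := congrFun hn.2 i
        have h2 := congrFun hn'.2 i
        simp only [hψ, Function.update_apply, if_neg hi] at h1 h2
        rw [h1, h2]
    have hcardim : F.card = (F.image fun n => n i₀).card :=
      (Finset.card_image_of_injOn hinj).symm
    set s : ℝ := ∑ i ∈ Finset.univ \ {i₀}, (b i : ℝ) * c i with hs
    have hmem : ∀ x ∈ (F.image fun n => n i₀ : Finset ℤ),
        (-s / c i₀ - W / |c i₀|) ≤ (x:ℝ) ∧ (x:ℝ) ≤ (-s / c i₀ - W / |c i₀|) + L := by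
      intro x hx
      rw [Finset.mem_image] at hx
      obtain ⟨n, hn, rfl⟩ := hx
      rw [hF, Finset.mem_filter] at hn
      have hsum : ∑ i, (n i : ℝ) * c i = (n i₀ : ℝ) * c i₀ + s := by
        rw [hs, Finset.sum_eq_add_sum_sdiff_singleton_of_mem (Finset.mem_univ i₀)
          (fun i => (n i : ℝ) * c i)]
        congr 1
        refine Finset.sum_congr rfl fun i hi => ?_
        rcases Finset.mem_sdiff.mp hi with ⟨-, hi'⟩
        rw [Finset.mem_singleton] at hi'
        have hbi := congrFun hn.2 i
        simp only [hψ, Function.update_apply, if_neg hi'] at hbi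
        rw [hbi]
      have hW' := hcond n hn.1
      rw [hsum] at hW'
      have key : |(n i₀ : ℝ) + s / c i₀| ≤ W / |c i₀| := by
        rw [le_div_iff₀ hc']
        have habs : |(n i₀ : ℝ) + s / c i₀| * |c i₀| = |(n i₀ : ℝ) * c i₀ + s| := by
          rw [← abs_mul]
          congr 1
          field_simp
        rw [habs]
        exact hW'
      have hL2 : L = 2 * (W / |c i₀|) := by rw [hLdef]; rw [mul_div_assoc]
      rcases abs_le.mp key with ⟨k1, k2⟩
      have hsc : -s / c i₀ = -(s / c i₀) := neg_div _ _
      constructor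
      · linarith
      · linarith
    have hcnt := int_interval_count (F.image fun n => n i₀) _ L hL hmem
    rw [← hcardim] at hcnt
    have hfl : F.card ≤ ⌊L + 1⌋₊ := Nat.le_floor hcnt
    rw [show L + 1 = L + (1:ℕ) by norm_num, Nat.floor_add_natCast hL 1] at hfl
    exact hfl
  have hmain := Finset.card_le_mul_card_image_of_maps_to hmaps K hfib
  rw [ht, card_fixed_box M i₀ 0] at hmain
  have h1 : (S.card : ℝ) ≤ (K : ℝ) * (((2 * M + 1) ^ (d - 1) : ℕ) : ℝ) := by
    exact_mod_cast hmain
  have h2 : (K : ℝ) ≤ L + 1 := by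
    rw [hK]
    push_cast
    have := Nat.floor_le hL
    linarith
  calc (S.card : ℝ) ≤ (K : ℝ) * (((2 * M + 1) ^ (d - 1) : ℕ) : ℝ) := h1
  _ ≤ (L + 1) * (((2 * M + 1) ^ (d - 1) : ℕ) : ℝ) := by
      apply mul_le_mul_of_nonneg_right h2 (by positivity)

def nsup (n : Fin d → ℤ) : ℕ := Finset.univ.sup fun i => (n i).natAbs

lemma abs_le_nsup (n : Fin d → ℤ) (i : Fin d) : |n i| ≤ (nsup n : ℤ) := by
  rw [Int.abs_eq_natAbs]
  exact_mod_cast Finset.le_sup (f := fun i => (n i).natAbs) (Finset.mem_univ i)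

lemma nsup_le_iff {M : ℕ} {n : Fin d → ℤ} : nsup n ≤ M ↔ ∀ i, |n i| ≤ (M:ℤ) := by
  rw [nsup, Finset.sup_le_iff]
  constructor
  · intro h i
    rw [Int.abs_eq_natAbs]
    exact_mod_cast h i (Finset.mem_univ i)
  · intro h i _
    have := h i
    rw [Int.abs_eq_natAbs] at this
    exact_mod_cast this

lemma mem_box_iff_nsup {M : ℕ} {n : Fin d → ℤ} :
    n ∈ (box M : Finset (Fin d → ℤ)) ↔ nsup n ≤ M := by
  rw [mem_box, nsup_le_iff]

lemma one_le_nsup {n : Fin d → ℤ} (hn : n ≠ 0) : 1 ≤ nsup n := by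
  by_contra h
  push_neg at h
  apply hn
  funext i
  show n i = 0
  have : (n i).natAbs ≤ nsup n :=
    Finset.le_sup (f := fun i => (n i).natAbs) (Finset.mem_univ i)
  omega

lemma exists_nsup_eq (hd : 1 ≤ d) (n : Fin d → ℤ) : ∃ i, nsup n = (n i).natAbs := by
  have hne : (Finset.univ : Finset (Fin d)).Nonempty := by
    rw [Finset.univ_nonempty_iff]
    exact Fin.pos_iff_nonempty.mp hd
  obtain ⟨i, -, hi⟩ := Finset.exists_mem_eq_sup Finset.univ hne fun i => (n i).natAbs
  exact ⟨i, hi⟩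

lemma shell_card (hd : 1 ≤ d) (M j : ℕ) :
    (((box M : Finset (Fin d → ℤ)).filter fun n => nsup n = j).card : ℝ)
      ≤ 2 * d * (2 * j + 1) ^ (d - 1) := by
  classical
  set piece : Fin d × Bool → Finset (Fin d → ℤ) := fun p =>
    Fintype.piFinset fun i => if i = p.1 then ({(if p.2 then (j:ℤ) else -(j:ℤ))} : Finset ℤ)
      else Finset.Icc (-(j:ℤ)) j with hpiece
  have hsub : ((box M : Finset (Fin d → ℤ)).filter fun n => nsup n = j)
      ⊆ (Finset.univ : Finset (Fin d × Bool)).biUnion piece := by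
    intro n hn
    rw [Finset.mem_filter] at hn
    rcases hn with ⟨-, hj⟩
    obtain ⟨i, hi⟩ := exists_nsup_eq hd n
    have habs : (n i).natAbs = j := by omega
    have hni : n i = (j:ℤ) ∨ n i = -(j:ℤ) := by omega
    rw [Finset.mem_biUnion]
    refine ⟨(i, if n i = (j:ℤ) then true else false), Finset.mem_univ _, ?_⟩
    rw [hpiece, Fintype.mem_piFinset]
    intro l
    by_cases hl : l = i
    · subst hl
      by_cases hc : n l = (j:ℤ)
      · simp [hc]
      · have h2 : n l = -(j:ℤ) := by tauto
        have hjne : ¬(-(j:ℤ) = (j:ℤ)) := by omega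
        simp only [Finset.mem_singleton, h2, if_neg hjne]
        simp
    · rw [if_neg hl, Finset.mem_Icc]
      have : (n l).natAbs ≤ nsup n :=
        Finset.le_sup (f := fun i => (n i).natAbs) (Finset.mem_univ l)
      omega
  have hle := Finset.card_le_card hsub
  have hle2 := Finset.card_biUnion_le (s := (Finset.univ : Finset (Fin d × Bool))) (t := piece)
  have hpc : ∀ p : Fin d × Bool, (piece p).card = (2 * j + 1) ^ (d - 1) := by
    intro p
    rw [hpiece]
    exact card_fixed_box j p.1 _
  have : ∑ p : Fin d × Bool, (piece p).card = 2 * d * (2 * j + 1) ^ (d - 1) := by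
    rw [Finset.sum_congr rfl fun p _ => hpc p, Finset.sum_const, Finset.card_univ]
    simp [Fintype.card_prod, Fintype.card_fin]
    ring
  have := hle.trans (hle2.trans_eq this)
  exact_mod_cast this

lemma sum_nsup_rpow_le (hd : 1 ≤ d) {p : ℝ} (hp : (d:ℝ) < p) :
    ∃ Z : ℝ, 0 ≤ Z ∧ ∀ M : ℕ,
      ∑ m ∈ ((box M : Finset (Fin d → ℤ)).erase 0), ((nsup m : ℝ)) ^ (-p) ≤ Z := by
  set q : ℝ := p - ((d:ℝ) - 1) with hq
  have hq1 : 1 < q := by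
    rw [hq]; push_cast; linarith
  have hsummable : Summable fun n : ℕ => ((n:ℝ) ^ q)⁻¹ := Real.summable_nat_rpow_inv.mpr hq1
  set T : ℝ := ∑' n : ℕ, ((n:ℝ) ^ q)⁻¹ with hT
  have hTnn : 0 ≤ T := tsum_nonneg fun n => by positivity
  refine ⟨2 * d * 3 ^ (d - 1) * T, by positivity, fun M => ?_⟩
  set S := (box M : Finset (Fin d → ℤ)).erase 0 with hS
  have hmaps : ∀ m ∈ S, nsup m ∈ Finset.Icc 1 M := by
    intro m hm
    rw [hS, Finset.mem_erase] at hm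
    rw [Finset.mem_Icc]
    exact ⟨one_le_nsup hm.1, mem_box_iff_nsup.mp hm.2⟩
  have hfib := Finset.sum_fiberwise_of_maps_to hmaps fun m => ((nsup m : ℝ)) ^ (-p)
  rw [← hfib]
  have hterm : ∀ j ∈ Finset.Icc 1 M,
      ∑ m ∈ S.filter fun m => nsup m = j, ((nsup m : ℝ)) ^ (-p)
        ≤ 2 * d * 3 ^ (d - 1) * ((j:ℝ) ^ q)⁻¹ := by
    intro j hj
    rw [Finset.mem_Icc] at hj
    have hj1 : 1 ≤ j := hj.1
    have hjR : (1:ℝ) ≤ (j:ℝ) := by exact_mod_cast hj1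
    have hjpos : (0:ℝ) < (j:ℝ) := by linarith
    have hconst : ∀ m ∈ S.filter fun m => nsup m = j, ((nsup m : ℝ)) ^ (-p) = ((j:ℝ)) ^ (-p) := by
      intro m hm
      rw [Finset.mem_filter] at hm
      rw [hm.2]
    rw [Finset.sum_congr rfl hconst, Finset.sum_const, nsmul_eq_mul]
    have hcard : ((S.filter fun m => nsup m = j).card : ℝ) ≤ 2 * d * (2 * j + 1) ^ (d - 1) := by
      have hsub : S.filter (fun m => nsup m = j)
          ⊆ (box M : Finset (Fin d → ℤ)).filter fun m => nsup m = j := by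
        intro m hm
        rw [Finset.mem_filter] at hm ⊢
        rw [hS, Finset.mem_erase] at hm
        exact ⟨hm.1.2, hm.2⟩
      calc ((S.filter fun m => nsup m = j).card : ℝ)
          ≤ (((box M : Finset (Fin d → ℤ)).filter fun m => nsup m = j).card : ℝ) := by
            exact_mod_cast Finset.card_le_card hsub
      _ ≤ 2 * d * (2 * j + 1) ^ (d - 1) := shell_card hd M j
    have hshell : (2 * (j:ℝ) + 1) ^ (d - 1) ≤ (3:ℝ) ^ (d - 1) * (j:ℝ) ^ (d - 1) := by
      rw [← mul_pow]
      apply pow_le_pow_left₀ (by positivity)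
      linarith
    have hpow : (j:ℝ) ^ ((d:ℝ) - 1) * (j:ℝ) ^ (-p) = ((j:ℝ) ^ q)⁻¹ := by
      rw [← Real.rpow_add hjpos, ← Real.rpow_neg hjpos.le]
      congr 1
      rw [hq]; ring
    have hnpow : ((j:ℝ)) ^ (d - 1 : ℕ) = (j:ℝ) ^ ((d:ℝ) - 1) := by
      rw [← Real.rpow_natCast]
      congr 1
      have : ((d - 1 : ℕ) : ℝ) = (d:ℝ) - 1 := by
        have := Nat.cast_sub hd (R := ℝ)
        simpa using this
      rw [this]
    have hpnn : (0:ℝ) ≤ (j:ℝ) ^ (-p) := Real.rpow_nonneg hjpos.le _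
    have h2d : (0:ℝ) ≤ 2 * d := by positivity
    calc ((S.filter fun m => nsup m = j).card : ℝ) * ((j:ℝ)) ^ (-p)
        ≤ (2 * d * (2 * (j:ℝ) + 1) ^ (d - 1)) * ((j:ℝ)) ^ (-p) :=
          mul_le_mul_of_nonneg_right hcard hpnn
    _ ≤ (2 * d * (3 ^ (d - 1) * (j:ℝ) ^ (d - 1))) * ((j:ℝ)) ^ (-p) :=
          mul_le_mul_of_nonneg_right (mul_le_mul_of_nonneg_left hshell h2d) hpnn
    _ = 2 * d * 3 ^ (d - 1) * ((j:ℝ) ^ ((d:ℝ) - 1) * (j:ℝ) ^ (-p)) := by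
          rw [hnpow]; ring
    _ = 2 * d * 3 ^ (d - 1) * ((j:ℝ) ^ q)⁻¹ := by rw [hpow]
  calc ∑ j ∈ Finset.Icc 1 M, ∑ m ∈ S.filter fun m => nsup m = j, ((nsup m : ℝ)) ^ (-p)
      ≤ ∑ j ∈ Finset.Icc 1 M, 2 * d * 3 ^ (d - 1) * ((j:ℝ) ^ q)⁻¹ :=
        Finset.sum_le_sum hterm
  _ = 2 * d * 3 ^ (d - 1) * ∑ j ∈ Finset.Icc 1 M, ((j:ℝ) ^ q)⁻¹ := by
        rw [Finset.mul_sum]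
  _ ≤ 2 * d * 3 ^ (d - 1) * T := by
        apply mul_le_mul_of_nonneg_left _ (by positivity)
        exact Summable.sum_le_tsum _ (fun n _ => by positivity) hsummable

def C0 : ℝ := 1 + (2 * Real.pi)⁻¹ * ∑ i, ‖e i‖

lemma C0_ge_one : 1 ≤ C0 e := by
  have : (0:ℝ) ≤ (2 * Real.pi)⁻¹ * ∑ i, ‖e i‖ := by positivity
  rw [C0]; linarith

lemma C0_pos : 0 < C0 e := lt_of_lt_of_le one_pos (C0_ge_one e)

lemma abs_coord_le (n : Fin d → ℤ) (i : Fin d) : |(n i : ℝ)| ≤ C0 e * ‖Φ e n‖ := by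
  have hπ : (0:ℝ) < 2 * Real.pi := by positivity
  have h1 : (2 * Real.pi) * |(n i : ℝ)| = |⟪e i, Φ e n⟫| := by
    rw [inner_e_Φ, abs_mul, abs_of_pos hπ]
  have h2 : |⟪e i, Φ e n⟫| ≤ ‖e i‖ * ‖Φ e n‖ := abs_real_inner_le_norm _ _
  have h3 : ‖e i‖ ≤ (2 * Real.pi) * C0 e := by
    have hs : ‖e i‖ ≤ ∑ j, ‖e j‖ :=
      Finset.single_le_sum (f := fun j => ‖e j‖) (fun j _ => norm_nonneg _) (Finset.mem_univ i)
    have : (2 * Real.pi) * C0 e = 2 * Real.pi + ∑ j, ‖e j‖ := by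
      rw [C0]; field_simp
    rw [this]
    linarith
  have h4 : (2 * Real.pi) * |(n i : ℝ)| ≤ ((2 * Real.pi) * C0 e) * ‖Φ e n‖ := by
    rw [h1]
    calc |⟪e i, Φ e n⟫| ≤ ‖e i‖ * ‖Φ e n‖ := h2
    _ ≤ ((2 * Real.pi) * C0 e) * ‖Φ e n‖ :=
      mul_le_mul_of_nonneg_right h3 (norm_nonneg _)
  nlinarith [norm_nonneg (Φ e n), abs_nonneg ((n i : ℝ))]

lemma nsup_le_norm (hd : 1 ≤ d) (n : Fin d → ℤ) : (nsup n : ℝ) ≤ C0 e * ‖Φ e n‖ := by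
  obtain ⟨i, hi⟩ := exists_nsup_eq hd n
  have : ((nsup n : ℤ) : ℝ) = |(n i : ℝ)| := by
    rw [hi]
    push_cast
    rfl
  have h2 := abs_coord_le e n i
  calc (nsup n : ℝ) = |(n i : ℝ)| := by exact_mod_cast this
  _ ≤ C0 e * ‖Φ e n‖ := h2

def cbs : ℝ := ∑ i, ‖bF e i‖

lemma cbs_pos (hd : 1 ≤ d) : 0 < cbs e := by
  have i0 : Fin d := ⟨0, hd⟩
  have h1 : 0 < ‖bF e i0‖ := norm_pos_iff.mpr (Module.Basis.ne_zero (bF e) i0)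
  exact lt_of_lt_of_le h1 (Finset.single_le_sum (f := fun j => ‖bF e j‖)
    (fun j _ => norm_nonneg _) (Finset.mem_univ i0))

lemma norm_Φ_le (n : Fin d → ℤ) (M : ℝ) (hM : ∀ i, |(n i : ℝ)| ≤ M) :
    ‖Φ e n‖ ≤ M * cbs e := by
  rw [Φ, cbs]
  calc ‖∑ i, (n i : ℝ) • bF e i‖ ≤ ∑ i, ‖(n i : ℝ) • bF e i‖ := norm_sum_le _ _
  _ ≤ ∑ i, M * ‖bF e i‖ := by
      refine Finset.sum_le_sum fun i _ => ?_
      rw [norm_smul, Real.norm_eq_abs]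
      exact mul_le_mul_of_nonneg_right (hM i) (norm_nonneg _)
  _ = M * ∑ i, ‖bF e i‖ := by rw [Finset.mul_sum]

lemma norm_Φ_pos {n : Fin d → ℤ} (hn : n ≠ 0) : 0 < ‖Φ e n‖ := by
  rw [norm_pos_iff]
  intro h
  exact hn (Φ_injective e (by rw [h, Φ_zero]))

lemma jb_le (ξ : Esp d) (R : ℝ) (hR : 1 ≤ R) (h : ‖ξ‖ < R) : jb ξ ≤ Real.sqrt 2 * R := by
  rw [jb]
  have h1 : 1 + ‖ξ‖ ^ 2 ≤ 2 * R ^ 2 := by nlinarith [norm_nonneg ξ]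
  calc Real.sqrt (1 + ‖ξ‖ ^ 2) ≤ Real.sqrt (2 * R ^ 2) := Real.sqrt_le_sqrt h1
  _ = Real.sqrt 2 * R := by
      rw [Real.sqrt_mul (by norm_num), Real.sqrt_sq (by linarith)]

lemma one_le_jb (ξ : Esp d) : 1 ≤ jb ξ := by
  rw [jb]
  have h1 : (1:ℝ) ≤ 1 + ‖ξ‖ ^ 2 := by nlinarith [sq_nonneg ‖ξ‖]
  calc (1:ℝ) = Real.sqrt 1 := by simp
  _ ≤ Real.sqrt (1 + ‖ξ‖ ^ 2) := Real.sqrt_le_sqrt h1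

def Bfin (R : ℝ) : Finset (Fin d → ℤ) := (box ⌈C0 e * R⌉₊).filter fun n => ‖Φ e n‖ < R
def Ωfin (Ω : Set (Esp d)) (R : ℝ) : Finset (Fin d → ℤ) :=
  (Bfin e R).filter fun n => Φ e n ∈ Ω
def badfin (Ω : Set (Esp d)) (R : ℝ) : Finset (Fin d → ℤ) :=
  (Bfin e R).filter fun n => Φ e n ∉ Ω

lemma mem_Bfin (hd : 1 ≤ d) {n : Fin d → ℤ} {R : ℝ} :
    n ∈ Bfin e R ↔ ‖Φ e n‖ < R := by
  rw [Bfin, Finset.mem_filter]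
  constructor
  · exact fun h => h.2
  · intro h
    refine ⟨mem_box_iff_nsup.mpr ?_, h⟩
    have h1 := nsup_le_norm e hd n
    have h2 : C0 e * ‖Φ e n‖ ≤ C0 e * R :=
      mul_le_mul_of_nonneg_left h.le (C0_pos e).le
    have h3 : (nsup n : ℝ) ≤ (⌈C0 e * R⌉₊ : ℝ) := by
      calc (nsup n : ℝ) ≤ C0 e * R := le_trans h1 h2
      _ ≤ (⌈C0 e * R⌉₊ : ℝ) := Nat.le_ceil _
    exact_mod_cast h3

lemma setB_eq (hd : 1 ≤ d) (R : ℝ) :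
    Metric.ball (0 : Esp d) R ∩ dualLattice e = Φ e '' ↑(Bfin e R) := by
  ext x
  simp only [Set.mem_inter_iff, Metric.mem_ball, dist_zero_right, dualLattice_eq_range,
    Set.mem_range, Set.mem_image, Finset.mem_coe]
  constructor
  · rintro ⟨hx, n, rfl⟩
    exact ⟨n, (mem_Bfin e hd).mpr hx, rfl⟩
  · rintro ⟨n, hn, rfl⟩
    exact ⟨(mem_Bfin e hd).mp hn, n, rfl⟩

lemma setΩ_eq (hd : 1 ≤ d) (Ω : Set (Esp d)) (R : ℝ) :
    Ω ∩ Metric.ball (0 : Esp d) R ∩ dualLattice e = Φ e '' ↑(Ωfin e Ω R) := by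
  ext x
  simp only [Set.mem_inter_iff, Metric.mem_ball, dist_zero_right, dualLattice_eq_range,
    Set.mem_range, Set.mem_image, Finset.mem_coe, Ωfin, Finset.mem_filter]
  constructor
  · rintro ⟨⟨hΩx, hx⟩, n, rfl⟩
    exact ⟨n, ⟨(mem_Bfin e hd).mpr hx, hΩx⟩, rfl⟩
  · rintro ⟨n, ⟨hn, hΩn⟩, rfl⟩
    exact ⟨⟨hΩn, (mem_Bfin e hd).mp hn⟩, n, rfl⟩

lemma cardB_eq (hd : 1 ≤ d) (R : ℝ) :
    Nat.card ↥(Metric.ball (0 : Esp d) R ∩ dualLattice e) = (Bfin e R).card := by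
  rw [setB_eq e hd R, Nat.card_coe_set_eq, Set.ncard_image_of_injective _ (Φ_injective e),
    Set.ncard_coe_finset]

lemma cardΩ_eq (hd : 1 ≤ d) (Ω : Set (Esp d)) (R : ℝ) :
    Nat.card ↥(Ω ∩ Metric.ball (0 : Esp d) R ∩ dualLattice e) = (Ωfin e Ω R).card := by
  rw [setΩ_eq e hd Ω R, Nat.card_coe_set_eq, Set.ncard_image_of_injective _ (Φ_injective e),
    Set.ncard_coe_finset]

lemma card_split (Ω : Set (Esp d)) (R : ℝ) :
    (Ωfin e Ω R).card + (badfin e Ω R).card = (Bfin e R).card := by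
  rw [Ωfin, badfin]
  exact Finset.card_filter_add_card_filter_not _

/-- lower bound on the number of lattice points in the ball -/
lemma cardB_lower (hd : 1 ≤ d) (R : ℝ) (hR : 0 < R) :
    (R / (2 * cbs e)) ^ d ≤ ((Bfin e R).card : ℝ) := by
  have hcb := cbs_pos e hd
  set t : ℝ := R / (2 * cbs e) with htdef
  have ht : 0 < t := by positivity
  set M0 : ℕ := ⌊t⌋₊ with hM0
  have hsub : (box M0 : Finset (Fin d → ℤ)) ⊆ Bfin e R := by
    intro n hn
    rw [mem_Bfin e hd]
    have h1 : ∀ i, |(n i : ℝ)| ≤ (M0 : ℝ) := by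
      intro i
      have h2 := abs_le_nsup n i
      have h3 := mem_box_iff_nsup.mp hn
      have : |n i| ≤ (M0 : ℤ) := le_trans h2 (by exact_mod_cast h3)
      calc |(n i : ℝ)| = ((|n i| : ℤ) : ℝ) := by push_cast; rfl
      _ ≤ ((M0 : ℤ) : ℝ) := by exact_mod_cast this
      _ = (M0 : ℝ) := by push_cast; rfl
    have h4 : ‖Φ e n‖ ≤ (M0 : ℝ) * cbs e := norm_Φ_le e n _ h1
    have h5 : (M0 : ℝ) ≤ t := Nat.floor_le ht.le
    calc ‖Φ e n‖ ≤ (M0 : ℝ) * cbs e := h4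
    _ ≤ t * cbs e := mul_le_mul_of_nonneg_right h5 hcb.le
    _ = R / 2 := by rw [htdef]; field_simp
    _ < R := by linarith
  have hcard : (box M0 : Finset (Fin d → ℤ)).card ≤ (Bfin e R).card :=
    Finset.card_le_card hsub
  have h6 : t ≤ (2 * M0 + 1 : ℝ) := by
    have := Nat.sub_one_lt_floor t
    rcases le_or_gt t 1 with h | h
    · push_cast; linarith [Nat.cast_nonneg (α := ℝ) M0]
    · push_cast; linarith
  calc t ^ d ≤ (2 * (M0:ℝ) + 1) ^ d := pow_le_pow_left₀ ht.le h6 d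
  _ = (((2 * M0 + 1) ^ d : ℕ) : ℝ) := by push_cast; ring
  _ = ((box M0 : Finset (Fin d → ℤ)).card : ℝ) := by rw [card_box]
  _ ≤ ((Bfin e R).card : ℝ) := by exact_mod_cast hcard

set_option maxHeartbeats 2000000 in
lemma bad_bound (hd : 1 ≤ d) (δ ε τ γ : ℝ) (hδ₀ : 0 < δ) (hε₀ : 0 < ε) (hγ₀ : 0 < γ)
    (hεd : ε * (1 + τ) ≤ δ) (hτd : (d:ℝ) - 1 < τ) (hτ0 : 0 < τ)
    (Ω : Set (Esp d))
    (hΩ : Ω = {ξ : Esp d | ∀ k ∈ dualLattice e, k ≠ 0 → ‖k‖ < jb ξ ^ ε →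
      2 * γ * jb ξ ^ δ / ‖k‖ ^ τ < |(inner ℝ ξ k : ℝ)|}) :
    ∃ Cb : ℝ, 0 < Cb ∧ ∀ R : ℝ, 1 ≤ R →
      ((badfin e Ω R).card : ℝ) ≤ Cb * R ^ ((d:ℝ) - 1 + δ) := by
  obtain ⟨Z, hZ0, hZ⟩ := sum_nsup_rpow_le hd (p := τ + 1) (by linarith)
  set s2 : ℝ := Real.sqrt 2 with hs2def
  have hs2 : 1 ≤ s2 := by
    rw [hs2def, show (1:ℝ) = Real.sqrt 1 by simp]
    exact Real.sqrt_le_sqrt (by norm_num)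
  have hs2' : (0:ℝ) < s2 := by linarith
  have hC0 := C0_pos e
  have hC1 := C0_ge_one e
  have hεdd : ε * d ≤ δ := by
    have h1 : (d:ℝ) ≤ 1 + τ := by linarith
    nlinarith
  set A2c : ℝ := 4 * γ * d * C0 e * s2 ^ δ * (C0 e) ^ (τ + 1) with hA2c
  have hA2cnn : 0 ≤ A2c := by
    have : (0:ℝ) ≤ (d:ℕ) := Nat.cast_nonneg d
    have h1 : (0:ℝ) ≤ s2 ^ δ := Real.rpow_nonneg hs2'.le δ
    have h2 : (0:ℝ) ≤ (C0 e) ^ (τ + 1) := Real.rpow_nonneg hC0.le _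
    rw [hA2c]; positivity
  set B1 : ℝ := A2c * Z + (5 * C0 e) ^ d * s2 ^ (ε * d) with hB1
  have hB1pos : 0 < B1 := by
    have h1 : (0:ℝ) < (5 * C0 e) ^ d := by positivity
    have h2 : (0:ℝ) < s2 ^ (ε * d) := Real.rpow_pos_of_pos hs2' _
    have h3 : 0 ≤ A2c * Z := mul_nonneg hA2cnn hZ0
    rw [hB1]; nlinarith
  refine ⟨B1 * (5 * C0 e) ^ (d - 1), by positivity, fun R hR => ?_⟩
  have hR0 : (0:ℝ) < R := by linarith
  set MR : ℕ := ⌈C0 e * R⌉₊ with hMR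
  set MK : ℕ := ⌈C0 e * (s2 * R) ^ ε⌉₊ with hMK
  set K : Finset (Fin d → ℤ) := (box MK).erase 0 with hK
  have hs2R : (1:ℝ) ≤ s2 * R := by nlinarith
  have hs2R0 : (0:ℝ) < s2 * R := by linarith
  have hrp1 : (1:ℝ) ≤ (s2 * R) ^ ε := by
    calc (1:ℝ) = 1 ^ ε := (Real.one_rpow ε).symm
    _ ≤ (s2 * R) ^ ε := Real.rpow_le_rpow (by norm_num) hs2R hε₀.le
  set W : (Fin d → ℤ) → ℝ := fun m => 2 * γ * (s2 * R) ^ δ / ‖Φ e m‖ ^ τ with hW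
  set cf : (Fin d → ℤ) → Fin d → ℝ := fun m i => ⟪bF e i, Φ e m⟫ with hcf
  set slabf : (Fin d → ℤ) → Finset (Fin d → ℤ) := fun m =>
    (box MR).filter fun n => |∑ i, (n i : ℝ) * cf m i| ≤ W m with hslabf
  have hinner : ∀ n m : Fin d → ℤ, ⟪Φ e n, Φ e m⟫ = ∑ i, (n i : ℝ) * cf m i := by
    intro n m
    rw [show Φ e n = ∑ i, (n i : ℝ) • bF e i from rfl, sum_inner]
    exact Finset.sum_congr rfl fun i _ => real_inner_smul_left _ _ _
  have hcover : badfin e Ω R ⊆ K.biUnion slabf := by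
    intro n hn
    rw [badfin, Finset.mem_filter] at hn
    rcases hn with ⟨hnB, hnΩ⟩
    have hnbox : n ∈ (box MR : Finset (Fin d → ℤ)) := by
      rw [Bfin, Finset.mem_filter] at hnB; exact hnB.1
    have hnR : ‖Φ e n‖ < R := (mem_Bfin e hd).mp hnB
    rw [hΩ, Set.mem_setOf_eq] at hnΩ
    push_neg at hnΩ
    obtain ⟨k, hkdual, hk0, hksmall, hkres⟩ := hnΩ
    obtain ⟨m, rfl⟩ : ∃ m, Φ e m = k := by
      have h := hkdual
      rw [dualLattice_eq_range] at h
      exact h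
    have hm0 : m ≠ 0 := by
      intro h
      exact hk0 (by rw [h, Φ_zero])
    have hΦm := norm_Φ_pos e hm0
    have hjb1 := one_le_jb (Φ e n)
    have hjb2 := jb_le (Φ e n) R hR hnR
    have hjbe : jb (Φ e n) ^ ε ≤ (s2 * R) ^ ε :=
      Real.rpow_le_rpow (by linarith) hjb2 hε₀.le
    have hkn : ‖Φ e m‖ < (s2 * R) ^ ε := lt_of_lt_of_le hksmall hjbe
    have hmK : m ∈ K := by
      rw [hK, Finset.mem_erase]
      refine ⟨hm0, mem_box_iff_nsup.mpr ?_⟩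
      have h1 := nsup_le_norm e hd m
      have h2 : C0 e * ‖Φ e m‖ ≤ C0 e * (s2 * R) ^ ε :=
        mul_le_mul_of_nonneg_left hkn.le hC0.le
      have h3 : (nsup m : ℝ) ≤ (MK : ℝ) := by
        calc (nsup m : ℝ) ≤ C0 e * (s2 * R) ^ ε := le_trans h1 h2
        _ ≤ (MK : ℝ) := Nat.le_ceil _
      exact_mod_cast h3
    rw [Finset.mem_biUnion]
    refine ⟨m, hmK, ?_⟩
    rw [hslabf]
    simp only [Finset.mem_filter]
    refine ⟨hnbox, ?_⟩
    rw [← hinner n m]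
    have hjbd : jb (Φ e n) ^ δ ≤ (s2 * R) ^ δ :=
      Real.rpow_le_rpow (by linarith) hjb2 hδ₀.le
    have hden : (0:ℝ) < ‖Φ e m‖ ^ τ := Real.rpow_pos_of_pos hΦm _
    calc |⟪Φ e n, Φ e m⟫| ≤ 2 * γ * jb (Φ e n) ^ δ / ‖Φ e m‖ ^ τ := hkres
    _ ≤ 2 * γ * (s2 * R) ^ δ / ‖Φ e m‖ ^ τ := by
        apply div_le_div_of_nonneg_right _ hden.le
        · nlinarith
    _ = W m := rfl
  set P : ℝ := (((2 * MR + 1) ^ (d - 1) : ℕ) : ℝ) with hP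
  have hPnn : 0 ≤ P := Nat.cast_nonneg _
  set A3 : ℝ := 4 * γ * (d:ℝ) * C0 e * (C0 e) ^ (τ + 1) * (s2 * R) ^ δ with hA3
  have hA3eq : A3 = A2c * R ^ δ := by
    rw [hA3, hA2c, Real.mul_rpow hs2'.le hR0.le]
    ring
  have hA3nn : 0 ≤ A3 := by
    rw [hA3eq]
    exact mul_nonneg hA2cnn (Real.rpow_nonneg hR0.le _)
  have hslab : ∀ m ∈ K,
      ((slabf m).card : ℝ) ≤ (A3 * ((nsup m : ℝ)) ^ (-(τ + 1)) + 1) * P := by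
    intro m hm
    rw [hK, Finset.mem_erase] at hm
    rcases hm with ⟨hm0, hmbox⟩
    have hΦm := norm_Φ_pos e hm0
    have hns1 : 1 ≤ nsup m := one_le_nsup hm0
    have hnsR : (0:ℝ) < (nsup m : ℝ) := by exact_mod_cast hns1
    have hne : (Finset.univ : Finset (Fin d)).Nonempty := by
      rw [Finset.univ_nonempty_iff]
      exact Fin.pos_iff_nonempty.mp hd
    obtain ⟨i₀, -, hi₀⟩ := Finset.exists_max_image Finset.univ (fun i => |cf m i|) hne
    have hlow : ‖Φ e m‖ ≤ ((d:ℝ) * C0 e) * |cf m i₀| := by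
      have h1 : ‖Φ e m‖ * ‖Φ e m‖ = ∑ i, (m i : ℝ) * cf m i := by
        rw [← real_inner_self_eq_norm_mul_norm, hinner]
      have h2 : ∑ i, (m i : ℝ) * cf m i ≤ (d:ℝ) * ((C0 e * ‖Φ e m‖) * |cf m i₀|) := by
        calc ∑ i, (m i : ℝ) * cf m i ≤ ∑ i, |(m i : ℝ) * cf m i| :=
          Finset.sum_le_sum fun i _ => le_abs_self _
        _ = ∑ i, |(m i : ℝ)| * |cf m i| :=
            Finset.sum_congr rfl fun i _ => abs_mul _ _
        _ ≤ ∑ _i : Fin d, (C0 e * ‖Φ e m‖) * |cf m i₀| := by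
            refine Finset.sum_le_sum fun i _ => ?_
            have ha := abs_coord_le e m i
            have hb := hi₀ i (Finset.mem_univ i)
            nlinarith [abs_nonneg ((m i : ℝ)), abs_nonneg (cf m i₀), abs_nonneg (cf m i),
              norm_nonneg (Φ e m)]
        _ = (d:ℝ) * ((C0 e * ‖Φ e m‖) * |cf m i₀|) := by
            rw [Finset.sum_const, nsmul_eq_mul, Finset.card_univ, Fintype.card_fin]
      nlinarith [hΦm]
    have hcne : cf m i₀ ≠ 0 := by
      intro h
      rw [h, abs_zero, mul_zero] at hlow
      linarith
    have hWnn : 0 ≤ W m := by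
      have h3 := Real.rpow_nonneg hs2R0.le δ
      have h4 : (0:ℝ) < ‖Φ e m‖ ^ τ := Real.rpow_pos_of_pos hΦm _
      have : W m = 2 * γ * (s2 * R) ^ δ / ‖Φ e m‖ ^ τ := rfl
      rw [this]
      positivity
    have hsc := slab_card MR (cf m) i₀ hcne (W m) hWnn (slabf m)
      (by rw [hslabf]; exact Finset.filter_subset _ _)
      (by intro n hn; rw [hslabf, Finset.mem_filter] at hn; exact hn.2)
    rw [← hP] at hsc
    refine le_trans hsc (mul_le_mul_of_nonneg_right ?_ hPnn)
    have key : 2 * W m / |cf m i₀| ≤ A3 * ((nsup m : ℝ)) ^ (-(τ + 1)) := by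
      have habs : (0:ℝ) < |cf m i₀| := abs_pos.mpr hcne
      have hdR : (0:ℝ) < (d:ℝ) := by exact_mod_cast hd
      have h1 : 1 / |cf m i₀| ≤ (d:ℝ) * C0 e / ‖Φ e m‖ := by
        rw [div_le_div_iff₀ habs hΦm]
        nlinarith
      have hτ1 : (0:ℝ) < ‖Φ e m‖ ^ (τ + 1) := Real.rpow_pos_of_pos hΦm _
      have hτ0' : (0:ℝ) < ‖Φ e m‖ ^ τ := Real.rpow_pos_of_pos hΦm _
      have hnum : (0:ℝ) ≤ 4 * γ * (s2 * R) ^ δ / ‖Φ e m‖ ^ τ := by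
        have h3 := Real.rpow_nonneg hs2R0.le δ
        positivity
      have h2 : 2 * W m / |cf m i₀| ≤ (4 * γ * (s2 * R) ^ δ * ((d:ℝ) * C0 e)) / ‖Φ e m‖ ^ (τ + 1) := by
        have hWm : 2 * W m = 4 * γ * (s2 * R) ^ δ / ‖Φ e m‖ ^ τ := by
          rw [hW]; ring
        rw [div_eq_mul_one_div (2 * W m), hWm]
        calc (4 * γ * (s2 * R) ^ δ / ‖Φ e m‖ ^ τ) * (1 / |cf m i₀|)
            ≤ (4 * γ * (s2 * R) ^ δ / ‖Φ e m‖ ^ τ) * ((d:ℝ) * C0 e / ‖Φ e m‖) :=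
              mul_le_mul_of_nonneg_left h1 hnum
        _ = (4 * γ * (s2 * R) ^ δ * ((d:ℝ) * C0 e)) / (‖Φ e m‖ ^ τ * ‖Φ e m‖) := by
              field_simp
        _ = (4 * γ * (s2 * R) ^ δ * ((d:ℝ) * C0 e)) / ‖Φ e m‖ ^ (τ + 1) := by
              rw [Real.rpow_add hΦm, Real.rpow_one]
      have h5 : ‖Φ e m‖ ^ (-(τ + 1)) ≤ ((nsup m : ℝ) / C0 e) ^ (-(τ + 1)) := by
        apply Real.rpow_le_rpow_of_nonpos (by positivity) _ (by linarith)
        rw [div_le_iff₀ hC0]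
        calc (nsup m : ℝ) ≤ C0 e * ‖Φ e m‖ := nsup_le_norm e hd m
        _ = ‖Φ e m‖ * C0 e := by ring
      have h6 : ((nsup m : ℝ) / C0 e) ^ (-(τ + 1))
          = (C0 e) ^ (τ + 1) * ((nsup m : ℝ)) ^ (-(τ + 1)) := by
        rw [Real.div_rpow hnsR.le hC0.le, Real.rpow_neg hnsR.le, Real.rpow_neg hC0.le]
        field_simp
      have h7 : (4 * γ * (s2 * R) ^ δ * ((d:ℝ) * C0 e)) / ‖Φ e m‖ ^ (τ + 1)
          = (4 * γ * (s2 * R) ^ δ * ((d:ℝ) * C0 e)) * ‖Φ e m‖ ^ (-(τ + 1)) := by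
        rw [Real.rpow_neg hΦm.le]
        field_simp
      have h8 : (0:ℝ) ≤ 4 * γ * (s2 * R) ^ δ * ((d:ℝ) * C0 e) := by
        have h3 := Real.rpow_nonneg hs2R0.le δ
        positivity
      calc 2 * W m / |cf m i₀|
          ≤ (4 * γ * (s2 * R) ^ δ * ((d:ℝ) * C0 e)) / ‖Φ e m‖ ^ (τ + 1) := h2
      _ = (4 * γ * (s2 * R) ^ δ * ((d:ℝ) * C0 e)) * ‖Φ e m‖ ^ (-(τ + 1)) := h7
      _ ≤ (4 * γ * (s2 * R) ^ δ * ((d:ℝ) * C0 e)) * (((nsup m : ℝ) / C0 e) ^ (-(τ + 1))) :=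
            mul_le_mul_of_nonneg_left h5 h8
      _ = A3 * ((nsup m : ℝ)) ^ (-(τ + 1)) := by
            rw [h6, hA3]; ring
    linarith
  -- summing up
  have hsum1 : ((badfin e Ω R).card : ℝ) ≤ ∑ m ∈ K, ((slabf m).card : ℝ) := by
    have h1 : (badfin e Ω R).card ≤ (K.biUnion slabf).card := Finset.card_le_card hcover
    have h2 := Finset.card_biUnion_le (s := K) (t := slabf)
    have := le_trans h1 h2
    calc ((badfin e Ω R).card : ℝ) ≤ ((∑ m ∈ K, (slabf m).card : ℕ) : ℝ) := by exact_mod_cast this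
    _ = ∑ m ∈ K, ((slabf m).card : ℝ) := by push_cast; rfl
  have hsum2 : ∑ m ∈ K, ((slabf m).card : ℝ) ≤ (A3 * Z + (K.card : ℝ)) * P := by
    calc ∑ m ∈ K, ((slabf m).card : ℝ)
        ≤ ∑ m ∈ K, (A3 * ((nsup m : ℝ)) ^ (-(τ + 1)) + 1) * P := Finset.sum_le_sum hslab
    _ = (A3 * (∑ m ∈ K, ((nsup m : ℝ)) ^ (-(τ + 1))) + (K.card : ℝ)) * P := by
        rw [← Finset.sum_mul, Finset.sum_add_distrib, ← Finset.mul_sum, Finset.sum_const,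
          nsmul_eq_mul, mul_one]
    _ ≤ (A3 * Z + (K.card : ℝ)) * P := by
        apply mul_le_mul_of_nonneg_right _ hPnn
        have := hZ MK
        rw [hK]
        nlinarith [hZ MK]
  -- bound K.card
  have hKcard : (K.card : ℝ) ≤ (5 * C0 e) ^ d * s2 ^ (ε * d) * R ^ δ := by
    have h1 : K.card ≤ (box MK : Finset (Fin d → ℤ)).card := Finset.card_le_card (Finset.erase_subset _ _)
    rw [card_box] at h1
    have h2 : (2 * (MK:ℝ) + 1) ≤ 5 * C0 e * (s2 * R) ^ ε := by
      have h3 : (MK : ℝ) < C0 e * (s2 * R) ^ ε + 1 := by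
        rw [hMK]
        exact Nat.ceil_lt_add_one (by positivity)
      nlinarith [hrp1, hC1]
    have h4 : ((2 * MK + 1 : ℕ) : ℝ) ^ d ≤ (5 * C0 e * (s2 * R) ^ ε) ^ d := by
      apply pow_le_pow_left₀ (by positivity)
      push_cast
      exact h2
    have h5 : (5 * C0 e * (s2 * R) ^ ε) ^ d = (5 * C0 e) ^ d * ((s2 * R) ^ ε) ^ d := mul_pow _ _ _
    have h6 : ((s2 * R) ^ ε) ^ d = (s2 * R) ^ (ε * d) := by
      rw [← Real.rpow_natCast ((s2 * R) ^ ε) d, ← Real.rpow_mul hs2R0.le]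
    have h7 : (s2 * R) ^ (ε * d) = s2 ^ (ε * d) * R ^ (ε * d) := Real.mul_rpow hs2'.le hR0.le
    have h8 : R ^ (ε * d) ≤ R ^ δ := Real.rpow_le_rpow_of_exponent_le hR hεdd
    have h9 : (0:ℝ) ≤ s2 ^ (ε * d) := Real.rpow_nonneg hs2'.le _
    calc (K.card : ℝ) ≤ ((2 * MK + 1 : ℕ) : ℝ) ^ d := by exact_mod_cast h1
    _ ≤ (5 * C0 e * (s2 * R) ^ ε) ^ d := h4
    _ = (5 * C0 e) ^ d * (s2 ^ (ε * d) * R ^ (ε * d)) := by rw [h5, h6, h7]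
    _ ≤ (5 * C0 e) ^ d * (s2 ^ (ε * d) * R ^ δ) := by
        apply mul_le_mul_of_nonneg_left _ (by positivity)
        exact mul_le_mul_of_nonneg_left h8 h9
    _ = (5 * C0 e) ^ d * s2 ^ (ε * d) * R ^ δ := by ring
  -- bound P
  have hPle : P ≤ (5 * C0 e) ^ (d - 1) * R ^ ((d:ℝ) - 1) := by
    have h3 : (MR : ℝ) < C0 e * R + 1 := by
      rw [hMR]
      exact Nat.ceil_lt_add_one (by positivity)
    have h2 : (2 * (MR:ℝ) + 1) ≤ 5 * C0 e * R := by
      nlinarith [hC1, hR]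
    have h4 : ((2 * MR + 1 : ℕ) : ℝ) ^ (d - 1) ≤ (5 * C0 e * R) ^ (d - 1) := by
      apply pow_le_pow_left₀ (by positivity)
      push_cast
      exact h2
    have h5 : (5 * C0 e * R) ^ (d - 1) = (5 * C0 e) ^ (d - 1) * R ^ (d - 1) := mul_pow _ _ _
    have h6 : R ^ (d - 1 : ℕ) = R ^ ((d:ℝ) - 1) := by
      rw [← Real.rpow_natCast R (d - 1)]
      congr 1
      have : ((d - 1 : ℕ) : ℝ) = (d:ℝ) - 1 := by
        have := Nat.cast_sub hd (R := ℝ)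
        simpa using this
      rw [this]
    calc P = ((2 * MR + 1 : ℕ) : ℝ) ^ (d - 1) := by rw [hP]; push_cast; ring
    _ ≤ (5 * C0 e * R) ^ (d - 1) := h4
    _ = (5 * C0 e) ^ (d - 1) * R ^ ((d:ℝ) - 1) := by rw [h5, h6]
  -- combine
  have hQle : A3 * Z + (K.card : ℝ) ≤ B1 * R ^ δ := by
    rw [hA3eq, hB1]
    have h1 : A2c * R ^ δ * Z = A2c * Z * R ^ δ := by ring
    have h2 := hKcard
    nlinarith [Real.rpow_nonneg hR0.le δ]
  have hQnn : (0:ℝ) ≤ A3 * Z + (K.card : ℝ) := by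
    have := mul_nonneg hA3nn hZ0
    have := Nat.cast_nonneg (α := ℝ) K.card
    linarith
  calc ((badfin e Ω R).card : ℝ) ≤ ∑ m ∈ K, ((slabf m).card : ℝ) := hsum1
  _ ≤ (A3 * Z + (K.card : ℝ)) * P := hsum2
  _ ≤ (B1 * R ^ δ) * ((5 * C0 e) ^ (d - 1) * R ^ ((d:ℝ) - 1)) := by
      apply mul_le_mul hQle hPle hPnn
      positivity
  _ = B1 * (5 * C0 e) ^ (d - 1) * R ^ ((d:ℝ) - 1 + δ) := by
      rw [Real.rpow_add hR0]
      ring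

end NRD

open NRD in
/-- The nonresonant set `Ω ∩ Γ*` has density one:
`1 − ♯(Ω∩B_R∩Γ*)/♯(B_R∩Γ*) ≤ C R^{δ−1}`, and the ratio tends to 1. -/
theorem nonresonant_density_one
    {d : ℕ} (hd : 1 ≤ d) (e : Module.Basis (Fin d) ℝ (Esp d))
    (δ ε τ γ r : ℝ) (hδ₀ : 0 < δ) (hδ₁ : δ < 1) (hε₀ : 0 < ε) (hτ₀ : 0 < τ)
    (hr : r = (1/2) * sInf {t : ℝ | ∃ x ∈ dualLattice e, ∃ y ∈ dualLattice e,
      x ≠ y ∧ t = ‖x - y‖})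
    (hγ₀ : 0 < γ) (hγr : γ < r)
    (hε : ε ≤ δ / (1 + τ)) (hτ : (d : ℝ) - 1 < τ)
    (Ω : Set (Esp d))
    (hΩ : Ω = {ξ : Esp d | ∀ k ∈ dualLattice e, k ≠ 0 → ‖k‖ < jb ξ ^ ε →
      2 * γ * jb ξ ^ δ / ‖k‖ ^ τ < |(inner ℝ ξ k : ℝ)|}) :
    (∃ C : ℝ, ∀ R : ℝ,
      (r * 2 ^ (ε * (τ + 1)) / (2 * γ)) ^ (δ - ε * (τ + 1))⁻¹ < R →
      1 - (Nat.card ↥(Ω ∩ Metric.ball (0 : Esp d) R ∩ dualLattice e) : ℝ) /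
          (Nat.card ↥(Metric.ball (0 : Esp d) R ∩ dualLattice e) : ℝ) ≤
        C * R ^ (δ - 1)) ∧
    Filter.Tendsto
      (fun R : ℝ =>
        (Nat.card ↥(Ω ∩ Metric.ball (0 : Esp d) R ∩ dualLattice e) : ℝ) /
          (Nat.card ↥(Metric.ball (0 : Esp d) R ∩ dualLattice e) : ℝ))
      Filter.atTop (nhds 1) := by
  have hr0 : 0 < r := lt_trans hγ₀ hγr
  have h1τ : (0:ℝ) < 1 + τ := by linarith
  have hεd : ε * (1 + τ) ≤ δ := by
    rw [le_div_iff₀ h1τ] at hε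
    exact hε
  obtain ⟨Cb, hCb0, hbad⟩ := bad_bound e hd δ ε τ γ hδ₀ hε₀ hγ₀ hεd hτ hτ₀ Ω hΩ
  have hcb := cbs_pos e hd
  set c6 : ℝ := (2 * cbs e) ^ d with hc6
  have hc6pos : 0 < c6 := by positivity
  set R₀ : ℝ := (r * 2 ^ (ε * (τ + 1)) / (2 * γ)) ^ (δ - ε * (τ + 1))⁻¹ with hR₀
  have hR₀pos : 0 < R₀ := by
    apply Real.rpow_pos_of_pos
    have h2 : (0:ℝ) < 2 ^ (ε * (τ + 1)) := Real.rpow_pos_of_pos (by norm_num) _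
    have : (0:ℝ) < r * 2 ^ (ε * (τ + 1)) := mul_pos hr0 h2
    positivity
  set C : ℝ := max 1 (Cb * c6) with hC
  have hC1 : (1:ℝ) ≤ C := le_max_left _ _
  have hC2 : Cb * c6 ≤ C := le_max_right _ _
  have hC0 : (0:ℝ) < C := lt_of_lt_of_le one_pos hC1
  -- the ratio and its elementary properties
  have hratio_nonneg : ∀ R : ℝ,
      0 ≤ (Nat.card ↥(Ω ∩ Metric.ball (0 : Esp d) R ∩ dualLattice e) : ℝ) /
          (Nat.card ↥(Metric.ball (0 : Esp d) R ∩ dualLattice e) : ℝ) := by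
    intro R
    positivity
  have hbpos : ∀ R : ℝ, 0 < R → 0 < ((Bfin e R).card : ℝ) := by
    intro R hR
    have h1 := cardB_lower e hd R hR
    have h2 : (0:ℝ) < (R / (2 * cbs e)) ^ d := by positivity
    linarith
  have hratio_le_one : ∀ R : ℝ, 0 < R →
      (Nat.card ↥(Ω ∩ Metric.ball (0 : Esp d) R ∩ dualLattice e) : ℝ) /
          (Nat.card ↥(Metric.ball (0 : Esp d) R ∩ dualLattice e) : ℝ) ≤ 1 := by
    intro R hR
    rw [cardB_eq e hd R, cardΩ_eq e hd Ω R]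
    apply div_le_one_of_le₀ _ (Nat.cast_nonneg _)
    have := card_split e Ω R
    have h2 : (Ωfin e Ω R).card ≤ (Bfin e R).card := by omega
    exact_mod_cast h2
  -- the main estimate
  have hmain : ∀ R : ℝ, R₀ < R →
      1 - (Nat.card ↥(Ω ∩ Metric.ball (0 : Esp d) R ∩ dualLattice e) : ℝ) /
          (Nat.card ↥(Metric.ball (0 : Esp d) R ∩ dualLattice e) : ℝ) ≤
        C * R ^ (δ - 1) := by
    intro R hRR
    have hR0 : 0 < R := lt_trans hR₀pos hRR
    rcases le_or_gt R 1 with hR1 | hR1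
    · -- small R : trivial bound
      have h1 : (1:ℝ) ≤ R ^ (δ - 1) :=
        Real.one_le_rpow_of_pos_of_le_one_of_nonpos hR0 hR1 (by linarith)
      have h2 : (1:ℝ) ≤ C * R ^ (δ - 1) := by nlinarith
      have h3 := hratio_nonneg R
      linarith
    · -- large R
      have hR1' : 1 ≤ R := hR1.le
      rw [cardB_eq e hd R, cardΩ_eq e hd Ω R]
      have hsplit := card_split e Ω R
      have hb := hbpos R hR0
      have hsplit' : ((Ωfin e Ω R).card : ℝ) + ((badfin e Ω R).card : ℝ) = ((Bfin e R).card : ℝ) := by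
        exact_mod_cast hsplit
      have heq : 1 - ((Ωfin e Ω R).card : ℝ) / ((Bfin e R).card : ℝ)
          = ((badfin e Ω R).card : ℝ) / ((Bfin e R).card : ℝ) := by
        field_simp
        linarith
      rw [heq]
      -- lower bound on b in rpow form
      have hlow : R ^ ((d:ℝ)) / c6 ≤ ((Bfin e R).card : ℝ) := by
        have h1 := cardB_lower e hd R hR0
        have h2 : (R / (2 * cbs e)) ^ d = R ^ d / c6 := div_pow _ _ _
        have h3 : R ^ (d:ℝ) = R ^ (d:ℕ) := Real.rpow_natCast R d
        rw [h3]
        rw [h2] at h1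
        exact h1
      have hlowpos : (0:ℝ) < R ^ ((d:ℝ)) / c6 := by
        have := Real.rpow_pos_of_pos hR0 ((d:ℝ))
        positivity
      have hx := hbad R hR1'
      have hxnn : (0:ℝ) ≤ ((badfin e Ω R).card : ℝ) := Nat.cast_nonneg _
      calc ((badfin e Ω R).card : ℝ) / ((Bfin e R).card : ℝ)
          ≤ ((badfin e Ω R).card : ℝ) / (R ^ ((d:ℝ)) / c6) := by
            apply div_le_div_of_nonneg_left hxnn hlowpos hlow
      _ ≤ (Cb * R ^ ((d:ℝ) - 1 + δ)) / (R ^ ((d:ℝ)) / c6) := by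
            apply div_le_div_of_nonneg_right hx hlowpos.le
      _ = (Cb * c6) * (R ^ ((d:ℝ) - 1 + δ) / R ^ ((d:ℝ))) := by
            field_simp
      _ = (Cb * c6) * R ^ (δ - 1) := by
            rw [← Real.rpow_sub hR0]
            congr 2
            ring
      _ ≤ C * R ^ (δ - 1) := by
            apply mul_le_mul_of_nonneg_right hC2 (Real.rpow_nonneg hR0.le _)
  refine ⟨⟨C, hmain⟩, ?_⟩
  -- tendsto part
  have htend0 : Filter.Tendsto (fun R : ℝ => 1 - C * R ^ (δ - 1)) Filter.atTop (nhds 1) := by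
    have h1 : Filter.Tendsto (fun R : ℝ => R ^ (δ - 1)) Filter.atTop (nhds 0) := by
      have := tendsto_rpow_neg_atTop (y := 1 - δ) (by linarith)
      convert this using 2 with R
      ring_nf
    have h2 : Filter.Tendsto (fun R : ℝ => C * R ^ (δ - 1)) Filter.atTop (nhds 0) := by
      have := h1.const_mul C
      simpa using this
    have h3 := (tendsto_const_nhds (x := (1:ℝ)) (f := Filter.atTop)).sub h2
    simpa using h3
  apply tendsto_of_tendsto_of_tendsto_of_le_of_le' htend0 tendsto_const_nhds
  · filter_upwards [Filter.eventually_ge_atTop (R₀ + 1)] with R hR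
    have hRR : R₀ < R := by linarith
    have := hmain R hRR
    linarith
  · filter_upwards [Filter.eventually_ge_atTop (R₀ + 1)] with R hR
    exact hratio_le_one R (by linarith)
end
end
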